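/- arXiv:1811.03937 — 8 statements merged into one kernel-verified Lean document; each statement's English description precedes it below -/
import Mathlib

section
/- Let a, b > 0 and let η_a(t) = e^{−at}·1_{(0,∞)}(t). Then for all (x,ξ) ∈ ℝ², A(η_a,η_b)(x,ξ) = exp(−((a−b)/2)·x − ((a+b)/2)·|x|) · e^{−iπξ|x|} / (a + b + 2πiξ). In particular A(η_a,η_b)(x,ξ) ≠ 0 for all (x,ξ) ∈ ℝ². -/
open MeasureTheory Complex

/-- The cross-ambiguity function of `f, g : ℝ → ℂ`. -/
noncomputable def ambiguity (f g : ℝ → ℂ) (x ξ : ℝ) : ℂ :=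
  ∫ t : ℝ, f (t + x / 2) * (starRingEnd ℂ) (g (t - x / 2)) *
    Complex.exp (-2 * Real.pi * Complex.I * ξ * t)

/-- The one-sided exponential `η_a(t) = e^{-at} 1_{(0,∞)}(t)`. -/
noncomputable def eta (a : ℝ) : ℝ → ℂ :=
  fun t => if 0 < t then Complex.exp (-(a : ℂ) * t) else 0

lemma integrable_cexp_Ioi {c : ℂ} (hc : 0 < c.re) (m : ℝ) :
    IntegrableOn (fun t : ℝ => Complex.exp (-c * t)) (Set.Ioi m) := by
  have h := exp_neg_integrableOn_Ioi m hc
  refine h.congr' ?_ ?_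
  · exact (Complex.continuous_exp.comp (continuous_const.mul Complex.continuous_ofReal)).aestronglyMeasurable.restrict
  · filter_upwards with t
    rw [Complex.norm_exp]
    simp

lemma integral_cexp_Ioi {c : ℂ} (hc : 0 < c.re) (m : ℝ) :
    ∫ t in Set.Ioi m, Complex.exp (-c * t) = Complex.exp (-c * m) / c := by
  have hc0 : c ≠ 0 := fun h => by simp [h] at hc
  have := integral_Ioi_of_hasDerivAt_of_tendsto'
    (f := fun t : ℝ => -Complex.exp (-c * t) / c)
    (f' := fun t : ℝ => Complex.exp (-c * t)) (a := m) (m := 0)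
    (fun t _ => ?_) (integrable_cexp_Ioi hc m) ?_
  · rw [this]; ring
  · have h1 : HasDerivAt (fun t : ℝ => -c * (t : ℂ)) (-c) t := by
      simpa using ((Complex.ofRealCLM.hasDerivAt (x := t)).const_mul (-c))
    have h2 := (h1.cexp.neg.div_const c)
    convert h2 using 1
    · rfl
    · rfl
    · rw [mul_neg, neg_neg, mul_div_assoc, div_self hc0, mul_one]
  · have : Filter.Tendsto (fun t : ℝ => ‖-Complex.exp (-c * t) / c‖) Filter.atTop (nhds 0) := by
      have : (fun t : ℝ => ‖-Complex.exp (-c * t) / c‖)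
          = fun t : ℝ => Real.exp (-c.re * t) / ‖c‖ := by
        funext t
        rw [norm_div, norm_neg, Complex.norm_exp]
        simp
      rw [this]
      have htop : Filter.Tendsto (fun t : ℝ => c.re * t) Filter.atTop Filter.atTop :=
        Filter.Tendsto.const_mul_atTop hc Filter.tendsto_id
      have := Real.tendsto_exp_neg_atTop_nhds_zero.comp htop
      simp only [Function.comp_def, neg_mul] at this ⊢
      simpa using this.div_const ‖c‖
    have := (tendsto_zero_iff_norm_tendsto_zero).2 this
    simpa using this

theorem ambiguity_eta_eq_and_ne_zero (a b : ℝ) (ha : 0 < a) (hb : 0 < b) (x ξ : ℝ) :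
    ambiguity (eta a) (eta b) x ξ =
      Complex.exp (-((((a : ℂ) - b) / 2) * x) - (((a : ℂ) + b) / 2) * |x|) *
        Complex.exp (-Real.pi * Complex.I * ξ * |x|) /
        ((a : ℂ) + b + 2 * Real.pi * Complex.I * ξ) ∧
    ambiguity (eta a) (eta b) x ξ ≠ 0 := by
  set c : ℂ := (a : ℂ) + b + 2 * Real.pi * Complex.I * ξ with hc_def
  have hcre : c.re = a + b := by simp [hc_def]
  have hcre' : 0 < c.re := by rw [hcre]; linarith
  have hc0 : c ≠ 0 := fun h => by rw [h] at hcre'; simp at hcre'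
  have key : ∀ t : ℝ, eta a (t + x / 2) * (starRingEnd ℂ) (eta b (t - x / 2)) *
      Complex.exp (-2 * Real.pi * Complex.I * ξ * t) =
      Set.indicator (Set.Ioi (|x| / 2))
        (fun t : ℝ => Complex.exp (-((((a : ℂ) - b) / 2) * x)) * Complex.exp (-c * t)) t := by
    intro t
    unfold _root_.eta
    by_cases h1 : |x| / 2 < t
    · have hx1 : 0 < t + x / 2 := by
        rcases abs_cases x with ⟨h, _⟩ | ⟨h, _⟩ <;> rw [h] at h1 <;> linarith
      have hx2 : 0 < t - x / 2 := by
        rcases abs_cases x with ⟨h, _⟩ | ⟨h, _⟩ <;> rw [h] at h1 <;> linarith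
      rw [Set.indicator_apply, if_pos (Set.mem_Ioi.mpr h1), if_pos hx1, if_pos hx2]
      rw [← Complex.exp_conj]
      have : (-(b : ℂ) * ((t : ℝ) - x / 2 : ℝ)) = ((-b * (t - x / 2) : ℝ) : ℂ) := by
        push_cast; ring
      rw [this, Complex.conj_ofReal]
      rw [← Complex.exp_add, ← Complex.exp_add, ← Complex.exp_add]
      congr 1
      push_cast
      ring
    · rw [Set.indicator_apply, if_neg (fun hm => h1 (Set.mem_Ioi.mp hm))]
      push_neg at h1
      rcases abs_cases x with ⟨h, hx0⟩ | ⟨h, hx0⟩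
      · rw [h] at h1
        rw [if_neg (by intro hh; linarith : ¬ 0 < t - x / 2)]
        simp
      · rw [h] at h1
        rw [if_neg (by intro hh; linarith : ¬ 0 < t + x / 2)]
        simp
  have hval : ambiguity (eta a) (eta b) x ξ =
      Complex.exp (-((((a : ℂ) - b) / 2) * x)) * (Complex.exp (-c * (|x| / 2)) / c) := by
    rw [ambiguity]
    simp_rw [key]
    rw [MeasureTheory.integral_indicator measurableSet_Ioi, MeasureTheory.integral_const_mul,
      integral_cexp_Ioi hcre']
    push_cast
    ring_nf
  constructor
  · rw [hval, mul_div_assoc']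
    congr 1
    rw [← Complex.exp_add, ← Complex.exp_add]
    congr 1
    rw [hc_def]
    push_cast
    ring
  · rw [hval]
    exact mul_ne_zero (Complex.exp_ne_zero _) (div_ne_zero (Complex.exp_ne_zero _) hc0)
end

section
/- Let a > 0, let η_a(t) = e^{−at}·1_{(0,∞)}(t), and let f(t) = t·e^{−at}·1_{(0,∞)}(t) (that is, f = η_a ∗ η_a). Then the ambiguity function A(f,η_a) has no zeros: A(f,η_a)(x,ξ) ≠ 0 for every (x,ξ) ∈ ℝ². -/
open MeasureTheory Complex

/-!
Both factors are supported on half-lines, so with `c = 2a + 2πiξ` the ambiguity function is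
`∫_{t > |x|/2} (t + x/2) e^{-ct} dt`. The antiderivative `-(t + x/2 + 1/c) e^{-ct} / c` evaluates
this to `(b + 1/c) e^{-c|x|/2} / c` with `b = |x|/2 + x/2 ≥ 0`, which cannot vanish because
`Re (1/c) = 2a / |c|² > 0`.
-/

open Set Filter Topology Asymptotics

lemma add_pos_and_sub_pos_iff {α : Type*} [AddCommGroup α] [LinearOrder α] [IsOrderedAddMonoid α]
    {t y : α} : 0 < t + y ∧ 0 < t - y ↔ |y| < t := by
  rw [abs_lt, sub_pos, neg_lt_iff_pos_add, add_comm, and_comm]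

lemma ofReal_add_inv_ne_zero {b : ℝ} (hb : 0 ≤ b) {c : ℂ} (hc : 0 < c.re) :
    (b : ℂ) + c⁻¹ ≠ 0 := by
  refine ne_zero_of_re_pos ?_
  rw [add_re, ofReal_re, inv_re]
  have := normSq_pos.mpr (ne_zero_of_re_pos hc)
  positivity

lemma isLittleO_add_mul_cexp_neg_mul {c : ℂ} (hc : 0 < c.re) (d : ℂ) :
    (fun t : ℝ => ((t : ℂ) + d) * cexp (-c * t)) =o[atTop]
      fun t => Real.exp (-(c.re / 2) * t) := by
  have hr : 0 < c.re / 2 := half_pos hc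
  have hlin : (fun t : ℝ => (t : ℂ) + d) =o[atTop] fun t => Real.exp (c.re / 2 * t) := by
    refine IsLittleO.add ?_ ?_
    · exact isLittleO_ofReal_left.mpr (by simpa using isLittleO_pow_exp_pos_mul_atTop 1 hr)
    · exact isLittleO_const_left.mpr <| Or.inr <| tendsto_norm_atTop_atTop.comp <|
        Real.tendsto_exp_atTop.comp (tendsto_id.const_mul_atTop hr)
  have hexp : (fun t : ℝ => cexp (-c * t)) =O[atTop] fun t => Real.exp (-c.re * t) :=
    isBigO_of_le _ fun t => by simp [Complex.norm_exp]
  refine (hlin.mul_isBigO hexp).congr_right fun t => ?_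
  rw [← Real.exp_add]
  ring_nf

lemma tendsto_add_mul_cexp_neg_mul_atTop {c : ℂ} (hc : 0 < c.re) (d : ℂ) :
    Tendsto (fun t : ℝ => ((t : ℂ) + d) * cexp (-c * t)) atTop (𝓝 0) :=
  (isLittleO_add_mul_cexp_neg_mul hc d).trans_tendsto <|
    Real.tendsto_exp_atBot.comp (tendsto_id.const_mul_atTop_of_neg (by linarith))

lemma integrableOn_add_mul_cexp_neg_mul_Ioi {c : ℂ} (hc : 0 < c.re) (d : ℂ) (m : ℝ) :
    IntegrableOn (fun t : ℝ => ((t : ℂ) + d) * cexp (-c * t)) (Ioi m) :=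
  (integrableOn_Ici_iff_integrableOn_Ioi (by finiteness)).mp <|
    ((Continuous.continuousOn (by fun_prop)).locallyIntegrableOn measurableSet_Ici
      ).integrableOn_of_isBigO_atTop (isLittleO_add_mul_cexp_neg_mul hc d).isBigO
      ⟨Ioi 0, Ioi_mem_atTop 0, exp_neg_integrableOn_Ioi 0 (half_pos hc)⟩

lemma hasDerivAt_neg_add_inv_mul_cexp_neg_mul_div {c : ℂ} (hc : c ≠ 0) (d : ℂ) (t : ℝ) :
    HasDerivAt (fun t : ℝ => -(((t : ℂ) + (d + c⁻¹)) * cexp (-c * t)) / c)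
      (((t : ℂ) + d) * cexp (-c * t)) t := by
  have hexp : HasDerivAt (fun t : ℝ => cexp (-c * t)) (cexp (-c * t) * (-c * 1)) t :=
    (((hasDerivAt_id (t : ℂ)).const_mul (-c)).comp_ofReal).cexp
  have hlin : HasDerivAt (fun t : ℝ => (t : ℂ) + (d + c⁻¹)) 1 t :=
    ((hasDerivAt_id (t : ℂ)).add_const _).comp_ofReal
  refine ((hlin.mul hexp).neg.div_const c).congr_deriv ?_
  field_simp
  ring

lemma integral_Ioi_add_mul_cexp_neg_mul {c : ℂ} (hc : 0 < c.re) (d : ℂ) (m : ℝ) :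
    ∫ t in Ioi m, ((t : ℂ) + d) * cexp (-c * t) = (m + (d + c⁻¹)) * cexp (-c * m) / c := by
  have hdecay := (tendsto_add_mul_cexp_neg_mul_atTop hc (d + c⁻¹)).neg.div_const c
  rw [neg_zero, zero_div] at hdecay
  rw [integral_Ioi_of_hasDerivAt_of_tendsto'
    (fun t _ => hasDerivAt_neg_add_inv_mul_cexp_neg_mul_div (ne_zero_of_re_pos hc) d t)
    (integrableOn_add_mul_cexp_neg_mul_Ioi hc d m) hdecay]
  ring

lemma ambiguity_eq_integral_Ioi (a x ξ : ℝ) :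
    ambiguity (fun t => if 0 < t then (t : ℂ) * cexp (-(a : ℂ) * t) else 0) (eta a) x ξ =
      ∫ t in Ioi |x / 2|, ((t : ℂ) + x / 2) * cexp (-(2 * a + 2 * Real.pi * ξ * I) * t) := by
  rw [ambiguity, ← integral_indicator measurableSet_Ioi]
  congr 1 with t
  by_cases ht : |x / 2| < t
  · obtain ⟨h₁, h₂⟩ := add_pos_and_sub_pos_iff.mpr ht
    simp only [_root_.eta, if_pos h₁, if_pos h₂, indicator_of_mem (mem_Ioi.mpr ht), ← exp_conj,
      map_mul, map_neg, conj_ofReal, mul_assoc, ← exp_add]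
    push_cast
    ring_nf
  · rw [indicator_of_notMem (by simpa using ht)]
    rw [← add_pos_and_sub_pos_iff, not_and_or] at ht
    rcases ht with h | h <;> simp [_root_.eta, h]

theorem ambiguity_teta_eta_ne_zero (a : ℝ) (ha : 0 < a) :
    ∀ x ξ : ℝ,
      ambiguity (fun t => if 0 < t then (t : ℂ) * Complex.exp (-(a : ℂ) * t) else 0)
        (eta a) x ξ ≠ 0 := by
  intro x ξ
  have hc : 0 < (2 * a + 2 * Real.pi * ξ * I).re := by simpa using ha
  have hb : 0 ≤ |x / 2| + x / 2 := by linarith [neg_abs_le (x / 2)]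
  rw [ambiguity_eq_integral_Ioi, integral_Ioi_add_mul_cexp_neg_mul hc, ← add_assoc]
  refine div_ne_zero (mul_ne_zero ?_ (exp_ne_zero _)) (ne_zero_of_re_pos hc)
  exact_mod_cast ofReal_add_inv_ne_zero hb hc
end

section
/- Let a, b > 0 and let γ_{a,b}(t) = exp(a·t − b·e^t). Then γ_{a,b} ∈ L²(ℝ), and for all (x,ξ) ∈ ℝ², A(γ_{a,b},γ_{a,b})(x,ξ) = (2b·cosh(x/2))^{−2a+2πiξ} · Γ(2a − 2πiξ), where the power is the complex power of the positive real number 2b·cosh(x/2) and Γ is the complex Gamma function. In particular A(γ_{a,b},γ_{a,b})(x,ξ) ≠ 0 for all (x,ξ) ∈ ℝ². -/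
open MeasureTheory Complex

/-- `γ_{a,b}(t) = exp(a t - b e^t)`. -/
noncomputable def gammaFun (a b : ℝ) : ℝ → ℂ :=
  fun t => (Real.exp (a * t - b * Real.exp t) : ℂ)

/-!
Since `e^(t + x/2) + e^(t - x/2) = 2 cosh(x/2) eᵗ`, the product
`γ_{a,b}(t + x/2) γ_{a,b}(t - x/2)` is `γ_{2a,c}(t)` with `c = 2b cosh(x/2)`, so the ambiguity
function is the two-sided Laplace transform `∫ exp(s t - c eᵗ) dt` with `s = 2a - 2πiξ`.
The substitution `u = eᵗ` makes this the Mellin transform of `u ↦ e^(-c u)`, i.e. Euler's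
integral `c^(-s) Γ(s)`, which does not vanish for `Re s > 0`. Square integrability follows from
the same integral, as `|γ_{a,b}|² = γ_{2a,2b}`.
-/

open Set
open scoped Real

section MellinExp

variable {E : Type*} [NormedAddCommGroup E] [NormedSpace ℂ E]

lemma abs_exp_smul_cpow_exp_sub_one_smul (s : ℂ) (f : ℝ → E) (t : ℝ) :
    |rexp t| • ((rexp t : ℂ) ^ (s - 1) • f (rexp t)) = cexp (s * t) • f (rexp t) := by
  rw [abs_of_pos (Real.exp_pos t), ← Complex.coe_smul, smul_smul, Complex.ofReal_exp,
    cpow_def_of_ne_zero (exp_ne_zero _),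
    log_exp (by simp [Real.pi_pos]) (by simp [Real.pi_nonneg]), ← Complex.exp_add]
  ring_nf

theorem mellinConvergent_iff_integrable_comp_exp {f : ℝ → E} {s : ℂ} :
    MellinConvergent f s ↔ Integrable (fun t : ℝ => cexp (s * t) • f (rexp t)) := by
  rw [MellinConvergent, ← Real.range_exp, ← image_univ,
    integrableOn_image_iff_integrableOn_abs_deriv_smul MeasurableSet.univ
      (fun x _ => (Real.hasDerivAt_exp x).hasDerivWithinAt) Real.exp_injective.injOn,
    integrableOn_univ]
  simp only [abs_exp_smul_cpow_exp_sub_one_smul]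

theorem mellin_eq_integral_comp_exp (f : ℝ → E) (s : ℂ) :
    mellin f s = ∫ t : ℝ, cexp (s * t) • f (rexp t) := by
  rw [mellin, ← Real.range_exp, ← image_univ,
    integral_image_eq_integral_abs_deriv_smul MeasurableSet.univ
      (fun x _ => (Real.hasDerivAt_exp x).hasDerivWithinAt) Real.exp_injective.injOn,
    setIntegral_univ]
  simp only [abs_exp_smul_cpow_exp_sub_one_smul]

end MellinExp

lemma exp_mul_sub_mul_exp_eq (s : ℂ) (c t : ℝ) :
    cexp (s * t - c * rexp t) = cexp (s * t) • ((rexp (-(c * rexp t)) : ℝ) : ℂ) := by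
  push_cast
  rw [smul_eq_mul, ← Complex.exp_add]
  ring_nf

section GammaIntegral

variable {s : ℂ} {c : ℝ}

theorem mellinConvergent_exp_neg_mul (hs : 0 < s.re) (hc : 0 < c) :
    MellinConvergent (fun x : ℝ => ((rexp (-(c * x)) : ℝ) : ℂ)) s := by
  refine (MellinConvergent.comp_mul_left (f := fun x : ℝ => ((rexp (-x) : ℝ) : ℂ)) hc).mpr ?_
  exact (GammaIntegral_convergent hs).congr_fun (fun x _ => mul_comm _ _) measurableSet_Ioi

theorem integrable_exp_mul_sub_mul_exp (hs : 0 < s.re) (hc : 0 < c) :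
    Integrable (fun t : ℝ => cexp (s * t - c * rexp t)) := by
  simpa only [exp_mul_sub_mul_exp_eq] using
    mellinConvergent_iff_integrable_comp_exp.mp (mellinConvergent_exp_neg_mul hs hc)

theorem integral_exp_mul_sub_mul_exp (hs : 0 < s.re) (hc : 0 < c) :
    ∫ t : ℝ, cexp (s * t - c * rexp t) = (c : ℂ) ^ (-s) * Gamma s := by
  simp only [exp_mul_sub_mul_exp_eq]
  rw [← mellin_eq_integral_comp_exp (fun x : ℝ => ((rexp (-(c * x)) : ℝ) : ℂ)),
    mellin_comp_mul_left (fun x : ℝ => ((rexp (-x) : ℝ) : ℂ)) s hc,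
    ← GammaIntegral_eq_mellin, ← Gamma_eq_integral hs, smul_eq_mul]

end GammaIntegral

section GammaFun

variable {a b : ℝ}

lemma gammaFun_eq_cexp (a b t : ℝ) : gammaFun a b t = cexp (a * t - b * rexp t) := by
  simp [gammaFun]

lemma continuous_gammaFun (a b : ℝ) : Continuous (gammaFun a b) := by
  unfold gammaFun
  fun_prop

theorem integrable_gammaFun (ha : 0 < a) (hb : 0 < b) : Integrable (gammaFun a b) := by
  rw [funext (gammaFun_eq_cexp a b)]
  exact integrable_exp_mul_sub_mul_exp (by simpa using ha) hb

lemma norm_gammaFun_sq (a b t : ℝ) :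
    ‖gammaFun a b t‖ ^ 2 = ‖gammaFun (2 * a) (2 * b) t‖ := by
  simp only [gammaFun, Complex.norm_real, Real.norm_eq_abs, Real.abs_exp, sq, ← Real.exp_add]
  ring_nf

theorem memLp_two_gammaFun (ha : 0 < a) (hb : 0 < b) : MemLp (gammaFun a b) 2 volume := by
  rw [memLp_two_iff_integrable_sq_norm (continuous_gammaFun a b).aestronglyMeasurable]
  simpa only [norm_gammaFun_sq] using (integrable_gammaFun (by positivity) (by positivity)).norm

lemma exp_add_half_add_exp_sub_half (x t : ℝ) :
    rexp (t + x / 2) + rexp (t - x / 2) = 2 * Real.cosh (x / 2) * rexp t := by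
  rw [Real.cosh_eq, Real.exp_add, Real.exp_sub, Real.exp_neg]
  field_simp

lemma gammaFun_add_half_mul_conj_gammaFun_sub_half (a b x t : ℝ) :
    gammaFun a b (t + x / 2) * starRingEnd ℂ (gammaFun a b (t - x / 2)) =
      gammaFun (2 * a) (2 * b * Real.cosh (x / 2)) t := by
  simp only [gammaFun, Complex.conj_ofReal, ← Complex.ofReal_mul, ← Real.exp_add]
  congr 2
  linear_combination (-b) * exp_add_half_add_exp_sub_half x t

theorem ambiguity_gammaFun_eq (ha : 0 < a) (hb : 0 < b) (x ξ : ℝ) :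
    ambiguity (gammaFun a b) (gammaFun a b) x ξ =
      ((2 * b * Real.cosh (x / 2) : ℝ) : ℂ) ^ (-(2 * a - 2 * π * I * ξ)) *
        Gamma (2 * a - 2 * π * I * ξ) := by
  have hs : 0 < (2 * a - 2 * π * I * ξ).re := by simp [ha]
  rw [← integral_exp_mul_sub_mul_exp hs (by positivity), ambiguity]
  congr 1 with t
  rw [gammaFun_add_half_mul_conj_gammaFun_sub_half, gammaFun_eq_cexp, ← Complex.exp_add]
  push_cast
  ring_nf

end GammaFun

theorem ambiguity_gammaFun (a b : ℝ) (ha : 0 < a) (hb : 0 < b) :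
    MemLp (gammaFun a b) 2 volume ∧
    ∀ x ξ : ℝ,
      ambiguity (gammaFun a b) (gammaFun a b) x ξ =
        ((2 * b * Real.cosh (x / 2) : ℝ) : ℂ) ^
            ((-2 * a : ℂ) + 2 * Real.pi * Complex.I * ξ) *
          Complex.Gamma ((2 * a : ℂ) - 2 * Real.pi * Complex.I * ξ) ∧
      ambiguity (gammaFun a b) (gammaFun a b) x ξ ≠ 0 := by
  refine ⟨memLp_two_gammaFun ha hb, fun x ξ => ?_⟩
  have hexp : (-2 * a : ℂ) + 2 * π * I * ξ = -(2 * a - 2 * π * I * ξ) := by ring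
  rw [hexp, ambiguity_gammaFun_eq ha hb]
  refine ⟨rfl, ?_⟩
  refine mul_ne_zero (cpow_ne_zero_iff.mpr (Or.inl ?_)) (Gamma_ne_zero_of_re_pos (by simp [ha]))
  exact_mod_cast (by positivity : 0 < 2 * b * Real.cosh (x / 2)).ne'
end

section
/- Let n ∈ ℕ, let f_n(t) = t^n·e^{−t}·1_{(0,∞)}(t), and let A_n be the polynomial A_n(z) = Σ_{k=0}^n C(n,k)·(n+k)!·z^{n−k} (where C(n,k) is the binomial coefficient). Then for all (x,ξ) ∈ ℝ², A(f_n,f_n)(x,ξ) = e^{−|x|(1+iπξ)} · (2 + 2πiξ)^{−(2n+1)} · A_n(|x|·(2 + 2πiξ)). -/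
open MeasureTheory Complex

/-- `f_n(t) = t^n e^{-t} 1_{(0,∞)}(t)`. -/
noncomputable def fn (n : ℕ) : ℝ → ℂ :=
  fun t => if 0 < t then (t : ℂ) ^ n * Complex.exp (-(t : ℂ)) else 0

/-- The polynomial `A_n(z) = ∑_{k=0}^n C(n,k) (n+k)! z^{n-k}`. -/
noncomputable def Apoly (n : ℕ) (z : ℂ) : ℂ :=
  ∑ k ∈ Finset.range (n + 1),
    (n.choose k : ℂ) * (Nat.factorial (n + k) : ℂ) * z ^ (n - k)

/-! Substituting `t = s + |x|/2`, the integrand vanishes for `s ≤ 0` and equals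
`e^{-|x|(1+πiξ)} (s(s+|x|))^n e^{-cs}` for `s > 0`, where `c = 2 + 2πiξ`.
Expanding `(s + |x|)^n` binomially and using the Laplace transform
`∫₀^∞ s^m e^{-cs} ds = m!/c^{m+1}` (valid for `Re c > 0`) gives
`∑ₖ C(n,k) |x|^{n-k} (n+k)!/c^{n+k+1} = c^{-(2n+1)} A_n(|x| c)`. -/

open Set Filter Topology

lemma norm_ofReal_pow_mul_cexp_neg_mul (c : ℂ) (m : ℕ) {t : ℝ} (ht : 0 ≤ t) :
    ‖(t : ℂ) ^ m * cexp (-c * t)‖ = t ^ m * Real.exp (-c.re * t) := by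
  simp [Complex.norm_exp, abs_of_nonneg ht]

lemma integrableOn_ofReal_pow_mul_cexp_neg_mul_Ioi {c : ℂ} (hc : 0 < c.re) (m : ℕ) :
    IntegrableOn (fun t : ℝ => (t : ℂ) ^ m * cexp (-c * t)) (Ioi 0) := by
  have hreal : IntegrableOn (fun t : ℝ => t ^ m * Real.exp (-c.re * t)) (Ioi 0) := by
    simpa using integrableOn_rpow_mul_exp_neg_mul_rpow (p := 1) (s := m)
      (by linarith [m.cast_nonneg (α := ℝ)]) one_pos hc
  refine hreal.mono' (by fun_prop) ?_
  filter_upwards [ae_restrict_mem measurableSet_Ioi] with t ht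
  exact (norm_ofReal_pow_mul_cexp_neg_mul c m (le_of_lt ht)).le

lemma tendsto_ofReal_pow_mul_cexp_neg_mul_atTop {c : ℂ} (hc : 0 < c.re) (m : ℕ) :
    Tendsto (fun t : ℝ => (t : ℂ) ^ m * cexp (-c * t)) atTop (𝓝 0) := by
  rw [tendsto_zero_iff_norm_tendsto_zero]
  refine (tendsto_rpow_mul_exp_neg_mul_atTop_nhds_zero m c.re hc).congr' ?_
  filter_upwards [eventually_ge_atTop 0] with t ht
  rw [norm_ofReal_pow_mul_cexp_neg_mul c m ht, Real.rpow_natCast]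

lemma hasDerivAt_ofReal_pow_succ_mul_cexp_neg_mul (c : ℂ) (m : ℕ) (t : ℝ) :
    HasDerivAt (fun s : ℝ => (s : ℂ) ^ (m + 1) * cexp (-c * s))
      ((m + 1) * ((t : ℂ) ^ m * cexp (-c * t)) -
        c * ((t : ℂ) ^ (m + 1) * cexp (-c * t))) t := by
  have hpow : HasDerivAt (fun s : ℝ => (s : ℂ) ^ (m + 1)) ((m + 1) * (t : ℂ) ^ m) t := by
    simpa using (hasDerivAt_pow (m + 1) (t : ℂ)).comp_ofReal
  have hexp : HasDerivAt (fun s : ℝ => cexp (-c * s)) (cexp (-c * t) * -c) t := by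
    simpa using ((hasDerivAt_id (t : ℂ)).const_mul (-c)).cexp.comp_ofReal
  exact (hpow.mul hexp).congr_deriv (by ring)

theorem integral_ofReal_pow_mul_cexp_neg_mul_Ioi {c : ℂ} (hc : 0 < c.re) (m : ℕ) :
    ∫ t in Ioi (0 : ℝ), (t : ℂ) ^ m * cexp (-c * t) = m.factorial / c ^ (m + 1) := by
  have hc0 : c ≠ 0 := by rintro rfl; simp at hc
  induction m with
  | zero =>
    simpa [div_neg, neg_div] using integral_exp_mul_complex_Ioi (a := -c) (by simpa) 0
  | succ m ih =>
    -- `t ^ (m + 1) * e^{-ct}` vanishes at `0` and at `∞`, so its derivative integrates to zero.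
    have hint := integrableOn_ofReal_pow_mul_cexp_neg_mul_Ioi hc
    have hftc := integral_Ioi_of_hasDerivAt_of_tendsto' (a := 0)
      (fun t _ => hasDerivAt_ofReal_pow_succ_mul_cexp_neg_mul c m t)
      (((hint m).const_mul _).sub ((hint (m + 1)).const_mul _))
      (tendsto_ofReal_pow_mul_cexp_neg_mul_atTop hc (m + 1))
    rw [integral_sub ((hint m).const_mul _) ((hint (m + 1)).const_mul _), integral_const_mul,
      integral_const_mul, ih] at hftc
    simp only [ofReal_zero, zero_pow m.succ_ne_zero, zero_mul, sub_zero, sub_eq_zero] at hftc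
    rw [Nat.factorial_succ, eq_div_iff (pow_ne_zero _ hc0)]
    rw [mul_div_assoc', div_eq_iff (pow_ne_zero _ hc0)] at hftc
    push_cast
    linear_combination -hftc

lemma one_div_pow_mul_Apoly {c : ℂ} (hc : c ≠ 0) (n : ℕ) (X : ℂ) :
    1 / c ^ (2 * n + 1) * Apoly n (X * c) =
      ∑ k ∈ Finset.range (n + 1),
        n.choose k * X ^ (n - k) * ((n + k).factorial / c ^ (n + k + 1)) := by
  rw [Apoly, Finset.mul_sum]
  refine Finset.sum_congr rfl fun k hk => ?_
  have hpow : c ^ (2 * n + 1) = c ^ (n + k + 1) * c ^ (n - k) := by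
    rw [← pow_add]
    congr 1
    have := Finset.mem_range_succ_iff.mp hk
    omega
  rw [mul_pow, hpow]
  field_simp

lemma mul_add_pow_mul_eq_sum (n : ℕ) (s X w : ℂ) :
    (s * (s + X)) ^ n * w =
      ∑ k ∈ Finset.range (n + 1), n.choose k * X ^ (n - k) * (s ^ (n + k) * w) := by
  rw [mul_pow, add_pow, Finset.mul_sum, Finset.sum_mul]
  refine Finset.sum_congr rfl fun k _ => ?_
  ring

theorem integral_ofReal_mul_add_pow_mul_cexp_neg_mul_Ioi {c : ℂ} (hc : 0 < c.re) (n : ℕ)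
    (X : ℂ) :
    ∫ s in Ioi (0 : ℝ), ((s : ℂ) * (s + X)) ^ n * cexp (-c * s) =
      1 / c ^ (2 * n + 1) * Apoly n (X * c) := by
  have hc0 : c ≠ 0 := by rintro rfl; simp at hc
  simp_rw [mul_add_pow_mul_eq_sum]
  rw [integral_finsetSum _ fun k _ =>
    (integrableOn_ofReal_pow_mul_cexp_neg_mul_Ioi hc (n + k)).const_mul _]
  simp_rw [integral_const_mul, integral_ofReal_pow_mul_cexp_neg_mul_Ioi hc,
    one_div_pow_mul_Apoly hc0]

lemma conj_fn (n : ℕ) (t : ℝ) : starRingEnd ℂ (fn n t) = fn n t := by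
  unfold fn
  split_ifs <;> simp [← Complex.exp_conj]

lemma fn_add_mul_fn (n : ℕ) {a : ℝ} (ha : 0 ≤ a) (s : ℝ) :
    fn n (s + a) * fn n s =
      (Ioi 0).indicator (fun s : ℝ => ((s : ℂ) * (s + a)) ^ n * cexp (-(2 * s + a))) s := by
  by_cases hs : 0 < s
  · have hsa : 0 < s + a := by linarith
    simp only [fn, if_pos hs, if_pos hsa, indicator_of_mem (mem_Ioi.mpr hs)]
    rw [show -(2 * (s : ℂ) + a) = -(s + a : ℝ) + -s by push_cast; ring, Complex.exp_add]
    push_cast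
    rw [mul_pow]
    ring
  · simp [fn, hs]

lemma fn_mul_fn_eq_fn_add_abs_mul_fn (n : ℕ) (x s : ℝ) :
    fn n (s + |x| / 2 + x / 2) * fn n (s + |x| / 2 - x / 2) = fn n (s + |x|) * fn n s := by
  rcases abs_cases x with ⟨hx, _⟩ | ⟨hx, _⟩ <;> rw [hx]
  · ring_nf
  · rw [mul_comm]
    ring_nf

lemma ambiguity_fn_eq_integral (n : ℕ) (x ξ : ℝ) :
    ambiguity (fn n) (fn n) x ξ =
      ∫ s in Ioi (0 : ℝ), cexp (-((|x| : ℝ) : ℂ) * (1 + Real.pi * I * ξ)) *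
        (((s : ℂ) * (s + (|x| : ℝ))) ^ n * cexp (-(2 + 2 * Real.pi * I * ξ) * s)) := by
  rw [ambiguity, ← integral_add_right_eq_self _ (|x| / 2),
    ← integral_indicator measurableSet_Ioi]
  congr 1
  ext s
  rw [conj_fn, fn_mul_fn_eq_fn_add_abs_mul_fn, fn_add_mul_fn n (abs_nonneg x)]
  by_cases hs : s ∈ Ioi 0
  · rw [indicator_of_mem hs, indicator_of_mem hs, mul_left_comm, mul_assoc, ← Complex.exp_add,
      ← Complex.exp_add]
    push_cast
    ring_nf
  · rw [indicator_of_notMem hs, indicator_of_notMem hs, zero_mul]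

theorem ambiguity_fn_eq (n : ℕ) (x ξ : ℝ) :
    ambiguity (fn n) (fn n) x ξ =
      Complex.exp (-((|x| : ℝ) : ℂ) * (1 + Real.pi * Complex.I * ξ)) *
        (1 / (2 + 2 * Real.pi * Complex.I * ξ) ^ (2 * n + 1)) *
        Apoly n (((|x| : ℝ) : ℂ) * (2 + 2 * Real.pi * Complex.I * ξ)) := by
  have hc : 0 < (2 + 2 * Real.pi * I * ξ).re := by simp
  rw [ambiguity_fn_eq_integral, integral_const_mul,
    integral_ofReal_mul_add_pow_mul_cexp_neg_mul_Ioi hc, ← mul_assoc]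
end

section
/- For every n ∈ ℕ, the polynomial A_n(z) = Σ_{k=0}^n C(n,k)·(n+k)!·z^{n−k} is a Hurwitz polynomial: every complex root z of A_n satisfies Re(z) < 0. -/
open Complex

/-!
`A_n(z) = n! 2ⁿ θ_n(z/2)` for the reverse Bessel polynomial `θ_n`, and like those it satisfies
a three-term recurrence `A_{n+2} = 2(n+2)(2n+3) A_{n+1} + (n+2)(n+1) z² A_n`. For `Re z ≥ 0`,
`z ≠ 0`, the ratios `f_n = A_{n+1} / (z A_n)` therefore obey `f_{n+1} = α_n / z + β_n / f_n`
with `α_n, β_n > 0`. Since `w ↦ 1/w` and positive combinations preserve the right half-plane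
and `f_0 = 1 + 2/z` lies in it, every `f_n` does, so no `A_n` vanishes there; and
`A_n(0) = (2n)!`.
-/

open Nat Finset

theorem choose_add_two_succ_mul (n k : ℕ) :
    (n + 2).choose (k + 1) * ((n + k + 3) * (n + k + 2)) =
      2 * (n + 2) * (2 * n + 3) * (n + 1).choose k + (n + 2) * (n + 1) * n.choose (k + 1) := by
  obtain hkn | rfl | hlt : k ≤ n ∨ k = n + 1 ∨ n + 1 < k := by omega
  · obtain ⟨m, rfl⟩ := exists_add_of_le hkn
    have h1 := add_one_mul_choose_eq (k + m + 1) k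
    have h2 := choose_mul_succ_eq (k + m) (k + 1)
    have h3 := choose_mul_succ_eq (k + m + 1) (k + 1)
    rw [show k + m + 1 - (k + 1) = m by omega] at h2
    rw [show k + m + 1 + 1 - (k + 1) = m + 1 by omega] at h3
    zify at h1 h2 h3 ⊢
    linear_combination
      (-2 * (2 * ((k : ℤ) + m) + 3)) * h1 - ((k : ℤ) + m + 2) * h2 - (m : ℤ) * h3
  · rw [choose_self (n + 2), choose_self, choose_eq_zero_of_lt (by omega)]
    ring
  · simp [choose_eq_zero_of_lt, hlt, show n < k + 1 by omega, show n + 2 < k + 1 by omega]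

noncomputable def Aterm (n k : ℕ) (z : ℂ) : ℂ :=
  n.choose k * (n + k)! * z ^ (n - k)

theorem Aterm_eq_zero_of_lt {n k : ℕ} (h : n < k) (z : ℂ) : Aterm n k z = 0 := by
  simp [Aterm, choose_eq_zero_of_lt h]

theorem Apoly_eq_sum_range {n m : ℕ} (h : n + 1 ≤ m) (z : ℂ) :
    Apoly n z = ∑ k ∈ range m, Aterm n k z :=
  sum_subset (range_subset_range.2 h) fun k _ hk => Aterm_eq_zero_of_lt (by simpa using hk) z

theorem Aterm_add_two_zero (n : ℕ) (z : ℂ) :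
    Aterm (n + 2) 0 z = (n + 2) * (n + 1) * z ^ 2 * Aterm n 0 z := by
  simp only [Aterm, choose_zero_right, add_zero, factorial_succ, Nat.sub_zero, pow_add]
  push_cast
  ring

theorem Aterm_add_two_succ (n k : ℕ) (z : ℂ) :
    Aterm (n + 2) (k + 1) z =
      2 * (n + 2) * (2 * n + 3) * Aterm (n + 1) k z +
        (n + 2) * (n + 1) * z ^ 2 * Aterm n (k + 1) z := by
  -- for `n < k + 1` the exponents disagree (truncated subtraction), but the binomial vanishes
  have hpow : (n.choose (k + 1) : ℂ) * (z ^ 2 * z ^ (n - (k + 1))) =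
      n.choose (k + 1) * z ^ (n + 1 - k) := by
    by_cases hk : k + 1 ≤ n
    · rw [← pow_add, show 2 + (n - (k + 1)) = n + 1 - k by omega]
    · simp [choose_eq_zero_of_lt (not_le.1 hk)]
  have hcoef := congrArg (Nat.cast : ℕ → ℂ) (choose_add_two_succ_mul n k)
  have hfac : ((n + k + 3)! : ℂ) = (n + k + 3) * (n + k + 2) * (n + k + 1)! := by
    rw [factorial_succ, factorial_succ]; push_cast; ring
  push_cast at hcoef
  rw [Aterm, Aterm, Aterm, show n + 2 + (k + 1) = n + k + 3 by omega,
    show n + 2 - (k + 1) = n + 1 - k by omega, show n + 1 + k = n + k + 1 by omega,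
    show n + (k + 1) = n + k + 1 by omega, hfac]
  linear_combination
    (n + k + 1)! * z ^ (n + 1 - k) * hcoef - (n + 2) * (n + 1) * (n + k + 1)! * hpow

theorem Apoly_add_two (n : ℕ) (z : ℂ) :
    Apoly (n + 2) z =
      2 * (n + 2) * (2 * n + 3) * Apoly (n + 1) z + (n + 2) * (n + 1) * z ^ 2 * Apoly n z := by
  rw [Apoly_eq_sum_range le_rfl, Apoly_eq_sum_range le_rfl,
    Apoly_eq_sum_range (by omega : n + 1 ≤ n + 3), sum_range_succ',
    sum_range_succ' (Aterm n · z)]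
  simp only [Aterm_add_two_succ, Aterm_add_two_zero, sum_add_distrib, ← mul_sum]
  ring

theorem Apoly_at_zero (n : ℕ) : Apoly n 0 = (2 * n)! := by
  rw [Apoly, sum_eq_single_of_mem n (self_mem_range_succ n)]
  · simp [two_mul]
  · intro k hk hkn
    rw [zero_pow (by have := mem_range.1 hk; omega), mul_zero]

theorem re_inv_nonneg {w : ℂ} (hw : 0 ≤ w.re) : 0 ≤ w⁻¹.re := by
  rw [inv_re]; exact div_nonneg hw (normSq_nonneg w)

theorem re_inv_pos {w : ℂ} (hw : 0 < w.re) : 0 < w⁻¹.re := by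
  have hw0 : w ≠ 0 := fun h => by simp [h] at hw
  rw [inv_re]; exact div_pos hw (normSq_pos.2 hw0)

theorem re_div_pos_of_recurrence {p : ℕ → ℂ} {a b : ℕ → ℝ} {z : ℂ}
    (ha : ∀ n, 0 ≤ a n) (hb : ∀ n, 0 < b n) (hz : 0 ≤ z.re) (hz0 : z ≠ 0)
    (hrec : ∀ n, p (n + 2) = a n * p (n + 1) + b n * z ^ 2 * p n)
    (h0 : 0 < (p 1 / (z * p 0)).re) (n : ℕ) : 0 < (p (n + 1) / (z * p n)).re := by
  induction n with
  | zero => exact h0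
  | succ n ih =>
    have hf : p (n + 1) / (z * p n) ≠ 0 := fun h => by simp [h] at ih
    have hpn : p n ≠ 0 := fun h => hf (by simp [h])
    have hpn1 : p (n + 1) ≠ 0 := fun h => hf (by simp [h])
    have hstep :
        p (n + 2) / (z * p (n + 1)) = a n * z⁻¹ + b n * (p (n + 1) / (z * p n))⁻¹ := by
      rw [hrec]; field_simp
    rw [hstep, add_re, re_ofReal_mul, re_ofReal_mul]
    exact add_pos_of_nonneg_of_pos (mul_nonneg (ha n) (re_inv_nonneg hz))
      (mul_pos (hb n) (re_inv_pos ih))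

theorem Apoly_zero (z : ℂ) : Apoly 0 z = 1 := by
  simp [Apoly]

theorem Apoly_one (z : ℂ) : Apoly 1 z = z + 2 := by
  simp [Apoly, sum_range_succ]

theorem Apoly_ne_zero_of_re_nonneg {z : ℂ} (hz : 0 ≤ z.re) (n : ℕ) : Apoly n z ≠ 0 := by
  rcases eq_or_ne z 0 with rfl | hz0
  · rw [Apoly_at_zero]; exact_mod_cast factorial_ne_zero _
  have hbase : 0 < (Apoly 1 z / (z * Apoly 0 z)).re := by
    have : Apoly 1 z / (z * Apoly 0 z) = 1 + (2 : ℝ) * z⁻¹ := by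
      rw [Apoly_one, Apoly_zero]; field_simp; norm_num
    rw [this, add_re, one_re, re_ofReal_mul]
    linarith [re_inv_nonneg hz]
  have hratio := re_div_pos_of_recurrence (p := (Apoly · z))
    (a := fun n => 2 * (n + 2) * (2 * n + 3)) (b := fun n => (n + 2) * (n + 1))
    (fun n => by positivity) (fun n => by positivity) hz hz0
    (fun n => by push_cast; exact Apoly_add_two n z) hbase n
  exact fun h => by simp [h] at hratio

/-- `A_n` is a Hurwitz (stable) polynomial: all its complex roots have negative
real part. -/
theorem Apoly_isHurwitz (n : ℕ) : ∀ z : ℂ, Apoly n z = 0 → z.re < 0 := by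
  intro z hz
  by_contra! hre
  exact Apoly_ne_zero_of_re_nonneg hre n hz
end

section
/- Let n ∈ ℕ and let f_n(t) = t^n·e^{−t}·1_{(0,∞)}(t). Then the ambiguity function of f_n has no zeros: A(f_n,f_n)(x,ξ) ≠ 0 for every (x,ξ) ∈ ℝ². -/
open MeasureTheory Complex

/-! ### Auxiliary lemmas -/

section Aux

open Set Filter Finset

lemma integrableOn_pow_mul_exp (m : ℕ) {z : ℂ} (hz : 0 < z.re) :
    IntegrableOn (fun s : ℝ => (s : ℂ) ^ m * Complex.exp (-z * s)) (Set.Ioi 0) := by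
  have h0 : IntegrableOn (fun s : ℝ => s ^ (m : ℝ) * Real.exp (-z.re * s ^ (1 : ℝ)))
      (Set.Ioi 0) :=
    integrableOn_rpow_mul_exp_neg_mul_rpow
      (by exact_mod_cast neg_one_lt_zero.trans_le (Nat.cast_nonneg m)) one_pos hz
  have h1 : IntegrableOn (fun s : ℝ => s ^ m * Real.exp (-z.re * s)) (Set.Ioi 0) := by
    apply h0.congr_fun ?_ measurableSet_Ioi
    intro s hs
    simp [Real.rpow_natCast]
  refine Integrable.mono' h1 ?_ ?_
  · exact Continuous.aestronglyMeasurable <|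
      (Complex.continuous_ofReal.pow m).mul
        (Complex.continuous_exp.comp (continuous_const.mul Complex.continuous_ofReal))
  · filter_upwards [ae_restrict_mem measurableSet_Ioi] with s hs
    rw [Set.mem_Ioi] at hs
    rw [norm_mul, norm_pow, Complex.norm_exp,
      Complex.norm_real, Real.norm_eq_abs, abs_of_pos hs]
    have : (-z * (s : ℂ)).re = -z.re * s := by simp [Complex.mul_re]
    rw [this]

lemma tendsto_pow_mul_cexp (m : ℕ) {z : ℂ} (hz : 0 < z.re) :
    Filter.Tendsto (fun s : ℝ => (s : ℂ) ^ m * Complex.exp (-z * s)) atTop (nhds 0) := by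
  rw [tendsto_zero_iff_norm_tendsto_zero]
  have h := tendsto_rpow_mul_exp_neg_mul_atTop_nhds_zero m z.re hz
  refine h.congr' ?_
  filter_upwards [eventually_gt_atTop (0 : ℝ)] with s hs
  rw [norm_mul, norm_pow, Complex.norm_exp,
    Complex.norm_real, Real.norm_eq_abs, abs_of_pos hs, Real.rpow_natCast]
  congr 1
  simp [Complex.mul_re]

lemma integral_pow_mul_exp {z : ℂ} (hz : 0 < z.re) (m : ℕ) :
    ∫ s in Set.Ioi (0 : ℝ), (s : ℂ) ^ m * Complex.exp (-z * s)
      = (m.factorial : ℂ) / z ^ (m + 1) := by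
  have hz0 : z ≠ 0 := fun h => by simp [h] at hz
  induction m with
  | zero =>
    have hderiv : ∀ s ∈ Set.Ici (0 : ℝ),
        HasDerivAt (fun s : ℝ => -z⁻¹ * Complex.exp (-z * s))
          ((s : ℂ) ^ 0 * Complex.exp (-z * s)) s := by
      intro s _
      have h1 : HasDerivAt (fun w : ℂ => -z * w) (-z) (s : ℂ) := by
        simpa using (hasDerivAt_id (s : ℂ)).const_mul (-z)
      have h2 := (h1.cexp.const_mul (-z⁻¹)).comp_ofReal
      convert h2 using 1
      field_simp
    have htend : Filter.Tendsto (fun s : ℝ => -z⁻¹ * Complex.exp (-z * s)) atTop (nhds 0) := by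
      have := (tendsto_pow_mul_cexp 0 hz).const_mul (-z⁻¹)
      simpa using this
    rw [integral_Ioi_of_hasDerivAt_of_tendsto' hderiv (integrableOn_pow_mul_exp 0 hz) htend]
    simp [Nat.factorial]
  | succ m ih =>
    have hderiv : ∀ s ∈ Set.Ici (0 : ℝ),
        HasDerivAt (fun s : ℝ => -z⁻¹ * ((s : ℂ) ^ (m + 1) * Complex.exp (-z * s)))
          ((s : ℂ) ^ (m + 1) * Complex.exp (-z * s)
            - ((m : ℂ) + 1) / z * ((s : ℂ) ^ m * Complex.exp (-z * s))) s := by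
      intro s _
      have h1 : HasDerivAt (fun w : ℂ => -z * w) (-z) (s : ℂ) := by
        simpa using (hasDerivAt_id (s : ℂ)).const_mul (-z)
      have h3 := ((hasDerivAt_pow (m + 1) ((s : ℂ))).mul h1.cexp).const_mul (-z⁻¹)
      have h4 := h3.comp_ofReal
      convert h4 using 1
      · rfl
      simp only [Nat.add_sub_cancel, Nat.cast_add, Nat.cast_one]
      field_simp
      ring
    have htend : Filter.Tendsto
        (fun s : ℝ => -z⁻¹ * ((s : ℂ) ^ (m + 1) * Complex.exp (-z * s))) atTop (nhds 0) := by
      have := (tendsto_pow_mul_cexp (m + 1) hz).const_mul (-z⁻¹)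
      simpa using this
    have hint : IntegrableOn
        (fun s : ℝ => (s : ℂ) ^ (m + 1) * Complex.exp (-z * s)
          - ((m : ℂ) + 1) / z * ((s : ℂ) ^ m * Complex.exp (-z * s))) (Set.Ioi 0) :=
      (integrableOn_pow_mul_exp (m + 1) hz).sub
        ((integrableOn_pow_mul_exp m hz).const_mul _)
    have h0 := integral_Ioi_of_hasDerivAt_of_tendsto' hderiv hint htend
    rw [integral_sub (integrableOn_pow_mul_exp (m + 1) hz)
      ((integrableOn_pow_mul_exp m hz).const_mul _), integral_const_mul, ih] at h0
    have hF0 : -z⁻¹ * ((0 : ℝ) ^ (m + 1) * Complex.exp (-z * (0 : ℝ))) = 0 := by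
      simp
    rw [hF0, sub_zero] at h0
    have heq : ∫ s in Set.Ioi (0 : ℝ), (s : ℂ) ^ (m + 1) * Complex.exp (-z * s)
        = ((m : ℂ) + 1) / z * ((m.factorial : ℂ) / z ^ (m + 1)) := sub_eq_zero.mp h0
    rw [heq, Nat.factorial_succ]
    push_cast
    rw [div_mul_div_comm, ← pow_succ']

/-- The (scaled reverse Bessel) polynomial `∑_j C(n,j) (2n-j)! w^j`. -/
noncomputable def Pb (n : ℕ) (w : ℂ) : ℂ :=
  ∑ j ∈ Finset.range (n + 1), (n.choose j : ℂ) * ((2 * n - j).factorial : ℂ) * w ^ j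

lemma key_nat (n j : ℕ) (hj : j ≤ n) :
    (n + 2).choose (j + 2) * (2 * n + 2 - j).factorial
      = 2 * (n + 2) * (2 * n + 3) * ((n + 1).choose (j + 2) * (2 * n - j).factorial)
        + (n + 2) * (n + 1) * (n.choose j * (2 * n - j).factorial) := by
  obtain ⟨d, rfl⟩ := Nat.exists_eq_add_of_le hj
  rw [show 2 * (j + d) + 2 - j = j + 2 * d + 2 from by omega,
    show 2 * (j + d) - j = j + 2 * d from by omega]
  rcases d with _ | e
  · simp only [Nat.mul_zero, Nat.add_zero]
    rw [Nat.choose_self, Nat.choose_eq_zero_of_lt (by omega)]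
    simp [Nat.factorial_succ]
    ring
  · rw [show j + (e + 1) + 2 = j + e + 3 from by omega,
      show j + (e + 1) + 1 = j + e + 2 from by omega,
      show 2 * (j + (e + 1)) + 3 = 2 * j + 2 * e + 5 from by omega,
      show j + 2 * (e + 1) + 2 = j + 2 * e + 4 from by omega,
      show j + 2 * (e + 1) = j + 2 * e + 2 from by omega,
      show j + (e + 1) = j + e + 1 from by omega]
    have hf1 : (j + 2 * e + 4).factorial
        = (j + 2 * e + 4) * ((j + 2 * e + 3) * (j + 2 * e + 2).factorial) := by
      rw [show j + 2 * e + 4 = (j + 2 * e + 3) + 1 from by omega, Nat.factorial_succ,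
        show j + 2 * e + 3 = (j + 2 * e + 2) + 1 from by omega, Nat.factorial_succ]
    have hf2 : (j + e + 3).factorial
        = (j + e + 3) * ((j + e + 2) * (j + e + 1).factorial) := by
      rw [show j + e + 3 = (j + e + 2) + 1 from by omega, Nat.factorial_succ,
        show j + e + 2 = (j + e + 1) + 1 from by omega, Nat.factorial_succ]
    have hf3 : (j + e + 2).factorial = (j + e + 2) * (j + e + 1).factorial := by
      rw [show j + e + 2 = (j + e + 1) + 1 from by omega, Nat.factorial_succ]
    have hf4 : (e + 1).factorial = (e + 1) * e.factorial := Nat.factorial_succ e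
    have hf5 : (j + 2).factorial = (j + 2) * ((j + 1) * j.factorial) := by
      rw [show j + 2 = (j + 1) + 1 from by omega, Nat.factorial_succ, Nat.factorial_succ]
    have hne : ∀ m : ℕ, ((m.factorial : ℚ)) ≠ 0 :=
      fun m => Nat.cast_ne_zero.mpr m.factorial_ne_zero
    qify
    rw [Nat.cast_choose ℚ (show j + 2 ≤ j + e + 3 by omega),
      Nat.cast_choose ℚ (show j + 2 ≤ j + e + 2 by omega),
      Nat.cast_choose ℚ (show j ≤ j + e + 1 by omega),
      show j + e + 3 - (j + 2) = e + 1 from by omega,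
      show j + e + 2 - (j + 2) = e from by omega,
      show j + e + 1 - j = e + 1 from by omega,
      hf1, hf2, hf3, hf4, hf5]
    push_cast
    field_simp
    ring

lemma Pb_rec (n : ℕ) (w : ℂ) :
    Pb (n + 2) w = 2 * ((n : ℂ) + 2) * (2 * (n : ℂ) + 3) * Pb (n + 1) w
      + ((n : ℂ) + 2) * ((n : ℂ) + 1) * (w ^ 2 * Pb n w) := by
  have hL : Pb (n + 2) w
      = (∑ j ∈ Finset.range (n + 1),
          ((n + 2).choose (j + 2) : ℂ) * ((2 * (n + 2) - (j + 2)).factorial : ℂ) * w ^ (j + 2))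
        + ((n + 2).choose 1 : ℂ) * ((2 * (n + 2) - 1).factorial : ℂ) * w
        + ((2 * (n + 2)).factorial : ℂ) := by
    unfold Pb
    rw [Finset.sum_range_succ' _ (n + 2), Finset.sum_range_succ' _ (n + 1)]
    simp only [show ∀ k : ℕ, k + 1 + 1 = k + 2 from fun _ => rfl, Nat.choose_zero_right,
      Nat.cast_one, one_mul, pow_zero, pow_one, mul_one, Nat.sub_zero]
    ring
  have hR1 : Pb (n + 1) w
      = (∑ j ∈ Finset.range (n + 1),
          ((n + 1).choose (j + 2) : ℂ) * ((2 * (n + 1) - (j + 2)).factorial : ℂ) * w ^ (j + 2))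
        + ((n + 1).choose 1 : ℂ) * ((2 * (n + 1) - 1).factorial : ℂ) * w
        + ((2 * (n + 1)).factorial : ℂ) := by
    unfold Pb
    rw [Finset.sum_range_succ' _ (n + 1), Finset.sum_range_succ' _ n,
      Finset.sum_range_succ (fun j =>
        ((n + 1).choose (j + 2) : ℂ) * ((2 * (n + 1) - (j + 2)).factorial : ℂ) * w ^ (j + 2)) n]
    rw [Nat.choose_eq_zero_of_lt (show n + 1 < n + 2 by omega)]
    simp only [show ∀ k : ℕ, k + 1 + 1 = k + 2 from fun _ => rfl, Nat.choose_zero_right,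
      Nat.cast_one, Nat.cast_zero, one_mul, zero_mul, pow_zero, pow_one, mul_one, add_zero,
      Nat.sub_zero]
    ring
  have hR2 : w ^ 2 * Pb n w
      = ∑ j ∈ Finset.range (n + 1),
          (n.choose j : ℂ) * ((2 * n - j).factorial : ℂ) * w ^ (j + 2) := by
    unfold Pb
    rw [Finset.mul_sum]
    exact Finset.sum_congr rfl (fun j _ => by ring)
  have hterm : ∀ j ∈ Finset.range (n + 1),
      ((n + 2).choose (j + 2) : ℂ) * ((2 * (n + 2) - (j + 2)).factorial : ℂ) * w ^ (j + 2)
        = 2 * ((n : ℂ) + 2) * (2 * (n : ℂ) + 3)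
            * (((n + 1).choose (j + 2) : ℂ) * ((2 * (n + 1) - (j + 2)).factorial : ℂ)
              * w ^ (j + 2))
          + ((n : ℂ) + 2) * ((n : ℂ) + 1)
            * ((n.choose j : ℂ) * ((2 * n - j).factorial : ℂ) * w ^ (j + 2)) := by
    intro j hj
    have hj' : j ≤ n := Nat.lt_succ_iff.mp (Finset.mem_range.mp hj)
    have hC : (((n + 2).choose (j + 2) * (2 * n + 2 - j).factorial : ℕ) : ℂ)
        = ((2 * (n + 2) * (2 * n + 3) * ((n + 1).choose (j + 2) * (2 * n - j).factorial)
          + (n + 2) * (n + 1) * (n.choose j * (2 * n - j).factorial) : ℕ) : ℂ) := by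
      exact_mod_cast congrArg (fun m : ℕ => (m : ℂ)) (key_nat n j hj')
    push_cast at hC
    rw [show 2 * (n + 2) - (j + 2) = 2 * n + 2 - j from by omega,
      show 2 * (n + 1) - (j + 2) = 2 * n - j from by omega]
    linear_combination (w ^ (j + 2)) * hC
  have hlow1 : ((n + 2).choose 1 : ℂ) * ((2 * (n + 2) - 1).factorial : ℂ)
      = 2 * ((n : ℂ) + 2) * (2 * (n : ℂ) + 3)
        * (((n + 1).choose 1 : ℂ) * ((2 * (n + 1) - 1).factorial : ℂ)) := by
    have h : (n + 2).choose 1 * (2 * (n + 2) - 1).factorial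
        = 2 * (n + 2) * (2 * n + 3) * ((n + 1).choose 1 * (2 * (n + 1) - 1).factorial) := by
      rw [Nat.choose_one_right, Nat.choose_one_right,
        show 2 * (n + 2) - 1 = (2 * n + 2) + 1 from by omega, Nat.factorial_succ,
        show 2 * (n + 1) - 1 = 2 * n + 1 from by omega,
        show 2 * n + 2 = (2 * n + 1) + 1 from by omega, Nat.factorial_succ]
      ring
    calc ((n + 2).choose 1 : ℂ) * ((2 * (n + 2) - 1).factorial : ℂ)
        = (((n + 2).choose 1 * (2 * (n + 2) - 1).factorial : ℕ) : ℂ) := by push_cast; ring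
      _ = ((2 * (n + 2) * (2 * n + 3) * ((n + 1).choose 1 * (2 * (n + 1) - 1).factorial) : ℕ)
            : ℂ) := by rw [h]
      _ = _ := by push_cast; ring
  have hlow0 : (((2 * (n + 2)).factorial : ℕ) : ℂ)
      = 2 * ((n : ℂ) + 2) * (2 * (n : ℂ) + 3) * (((2 * (n + 1)).factorial : ℕ) : ℂ) := by
    have h : (2 * (n + 2)).factorial
        = 2 * (n + 2) * (2 * n + 3) * (2 * (n + 1)).factorial := by
      rw [show 2 * (n + 2) = (2 * n + 3) + 1 from by omega, Nat.factorial_succ,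
        show 2 * n + 3 = (2 * (n + 1)) + 1 from by omega, Nat.factorial_succ,
        show 2 * (n + 1) + 1 = 2 * n + 3 from by omega]
      ring
    calc (((2 * (n + 2)).factorial : ℕ) : ℂ)
        = ((2 * (n + 2) * (2 * n + 3) * (2 * (n + 1)).factorial : ℕ) : ℂ) := by rw [h]
      _ = _ := by push_cast; ring
  rw [hL, hR1, hR2, Finset.sum_congr rfl hterm, Finset.sum_add_distrib]
  rw [← Finset.mul_sum, ← Finset.mul_sum, hlow1, hlow0]
  ring

lemma Pb_zero_arg (n : ℕ) : Pb n 0 = ((2 * n).factorial : ℂ) := by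
  unfold Pb
  rw [Finset.sum_eq_single 0]
  · simp
  · intro j _ hj0
    simp [zero_pow hj0]
  · intro h
    exact absurd (Finset.mem_range.mpr (Nat.succ_pos n)) h

lemma Pb_pos (n : ℕ) : ∀ w : ℂ, 0 < w.re →
    Pb n w ≠ 0 ∧ 0 < (Pb (n + 1) w / (w * Pb n w)).re := by
  induction n with
  | zero =>
    intro w hw
    have hw0 : w ≠ 0 := fun h => by rw [h] at hw; simp at hw
    have h0 : Pb 0 w = 1 := by simp [Pb]
    have h1 : Pb 1 w = 2 + w := by
      unfold Pb
      rw [Finset.sum_range_succ, Finset.sum_range_succ, Finset.sum_range_zero]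
      norm_num [Nat.factorial]
    rw [h0, h1, mul_one]
    refine ⟨one_ne_zero, ?_⟩
    rw [add_div, div_self hw0, Complex.add_re]
    have h2 : 0 < ((2 : ℂ) / w).re := by
      rw [div_eq_mul_inv, show (2 : ℂ) = ((2 : ℝ) : ℂ) from by norm_num,
        Complex.re_ofReal_mul, Complex.inv_re]
      have : 0 < Complex.normSq w := Complex.normSq_pos.mpr hw0
      positivity
    rw [Complex.one_re]
    linarith
  | succ n ih =>
    intro w hw
    have hw0 : w ≠ 0 := fun h => by rw [h] at hw; simp at hw
    obtain ⟨hPn, hr⟩ := ih w hw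
    have hs0 : Pb (n + 1) w / (w * Pb n w) ≠ 0 := fun h => by rw [h] at hr; simp at hr
    have hP1 : Pb (n + 1) w ≠ 0 := by
      intro h
      rw [h, zero_div] at hr
      simp at hr
    refine ⟨hP1, ?_⟩
    have hrec := Pb_rec n w
    have hratio : Pb (n + 2) w / (w * Pb (n + 1) w)
        = ((2 * ((n : ℝ) + 2) * (2 * (n : ℝ) + 3) : ℝ) : ℂ) * w⁻¹
          + (((((n : ℝ) + 2) * ((n : ℝ) + 1)) : ℝ) : ℂ)
            * (Pb (n + 1) w / (w * Pb n w))⁻¹ := by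
      rw [hrec, inv_div]
      push_cast
      field_simp
    have goalshape : Pb (n + 1 + 1) w / (w * Pb (n + 1) w)
        = Pb (n + 2) w / (w * Pb (n + 1) w) := rfl
    rw [goalshape, hratio, Complex.add_re, Complex.re_ofReal_mul, Complex.re_ofReal_mul]
    have hinv1 : 0 < (w⁻¹).re := by
      rw [Complex.inv_re]
      have : 0 < Complex.normSq w := Complex.normSq_pos.mpr hw0
      positivity
    have hinv2 : 0 < ((Pb (n + 1) w / (w * Pb n w))⁻¹).re := by
      rw [Complex.inv_re]
      have : 0 < Complex.normSq (Pb (n + 1) w / (w * Pb n w)) :=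
        Complex.normSq_pos.mpr hs0
      positivity
    have hc1 : (0 : ℝ) < 2 * ((n : ℝ) + 2) * (2 * (n : ℝ) + 3) := by positivity
    have hc2 : (0 : ℝ) < ((n : ℝ) + 2) * ((n : ℝ) + 1) := by positivity
    positivity

lemma integral_prod_pow (n : ℕ) (c : ℝ) {z : ℂ} (hz : 0 < z.re) :
    ∫ s in Set.Ioi (0 : ℝ), (s : ℂ) ^ n * ((s : ℂ) + (c : ℂ)) ^ n * Complex.exp (-z * s)
      = Pb n ((c : ℂ) * z) / z ^ (2 * n + 1) := by
  have hz0 : z ≠ 0 := fun h => by simp [h] at hz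
  have hexp : ∀ s : ℝ, (s : ℂ) ^ n * ((s : ℂ) + (c : ℂ)) ^ n * Complex.exp (-z * s)
      = ∑ k ∈ Finset.range (n + 1),
          ((n.choose k : ℂ) * (c : ℂ) ^ (n - k)) * ((s : ℂ) ^ (n + k) * Complex.exp (-z * s)) := by
    intro s
    rw [add_pow, Finset.mul_sum, Finset.sum_mul]
    refine Finset.sum_congr rfl (fun k _ => ?_)
    rw [pow_add]
    ring
  simp_rw [hexp]
  rw [MeasureTheory.integral_finset_sum _
    (fun k _ => ((integrableOn_pow_mul_exp (n + k) hz).const_mul _))]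
  have heval : ∀ k ∈ Finset.range (n + 1),
      (∫ s in Set.Ioi (0 : ℝ),
        ((n.choose k : ℂ) * (c : ℂ) ^ (n - k)) * ((s : ℂ) ^ (n + k) * Complex.exp (-z * s)))
      = ((n.choose k : ℂ) * (c : ℂ) ^ (n - k)) * (((n + k).factorial : ℂ) / z ^ (n + k + 1)) :=
    fun k _ => by rw [MeasureTheory.integral_const_mul, integral_pow_mul_exp hz (n + k)]
  rw [Finset.sum_congr rfl heval]
  rw [← Finset.sum_range_reflect]
  unfold Pb
  rw [Finset.sum_div]
  refine Finset.sum_congr rfl (fun j hj => ?_)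
  have hj' : j ≤ n := Nat.lt_succ_iff.mp (Finset.mem_range.mp hj)
  rw [show n + 1 - 1 - j = n - j from by omega, Nat.choose_symm hj',
    show n - (n - j) = j from by omega, show n + (n - j) = 2 * n - j from by omega,
    show 2 * n - j + 1 = 2 * n + 1 - j from by omega]
  rw [mul_pow]
  have hzp : z ^ (2 * n + 1) = z ^ (2 * n + 1 - j) * z ^ j := by
    rw [← pow_add]
    congr 1
    omega
  rw [hzp]
  have hzj : z ^ j ≠ 0 := pow_ne_zero _ hz0
  have hzk : z ^ (2 * n + 1 - j) ≠ 0 := pow_ne_zero _ hz0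
  field_simp

lemma fn_shift (n : ℕ) (x ξ : ℝ) (s : ℝ) :
    fn n (s + |x| / 2 + x / 2) * (starRingEnd ℂ) (fn n (s + |x| / 2 - x / 2)) *
      Complex.exp (-2 * Real.pi * Complex.I * ξ * ((s + |x| / 2 : ℝ) : ℂ))
    = Set.indicator (Set.Ioi (0 : ℝ)) (fun u : ℝ =>
        Complex.exp (-((|x| : ℝ) : ℂ)) * Complex.exp (-2 * Real.pi * Complex.I * ξ * ((|x| / 2 : ℝ) : ℂ)) *
        ((u : ℂ) ^ n * ((u : ℂ) + ((|x| : ℝ) : ℂ)) ^ n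
          * Complex.exp (-((2 : ℂ) + 2 * Real.pi * Complex.I * ξ) * u))) s := by
  rcases le_or_gt s 0 with hs | hs
  · rw [Set.indicator_of_notMem (by simpa using hs)]
    rcases le_or_gt 0 x with hx | hx
    · have h2 : fn n (s + |x| / 2 - x / 2) = 0 := by
        rw [_root_.abs_of_nonneg hx]
        unfold fn
        rw [if_neg (by push_neg; linarith)]
      rw [h2]
      simp
    · have h1 : fn n (s + |x| / 2 + x / 2) = 0 := by
        rw [_root_.abs_of_neg hx]
        unfold fn
        rw [if_neg (by push_neg; linarith)]
      rw [h1]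
      simp
  · rw [Set.indicator_of_mem (Set.mem_Ioi.mpr hs)]
    rcases le_or_gt 0 x with hx | hx
    · rw [_root_.abs_of_nonneg hx, show s + x / 2 + x / 2 = s + x from by ring,
        show s + x / 2 - x / 2 = s from by ring]
      unfold fn
      rw [if_pos (by linarith : (0 : ℝ) < s + x), if_pos hs]
      rw [map_mul, map_pow, Complex.conj_ofReal, ← Complex.exp_conj, map_neg,
        Complex.conj_ofReal]
      push_cast
      calc ((s : ℂ) + (x : ℂ)) ^ n * Complex.exp (-((s : ℂ) + (x : ℂ)))
            * ((s : ℂ) ^ n * Complex.exp (-(s : ℂ)))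
            * Complex.exp (-2 * Real.pi * Complex.I * ξ * ((s : ℂ) + (x : ℂ) / 2))
          = (s : ℂ) ^ n * ((s : ℂ) + (x : ℂ)) ^ n
            * Complex.exp ((-((s : ℂ) + (x : ℂ))) + (-(s : ℂ))
              + (-2 * Real.pi * Complex.I * ξ * ((s : ℂ) + (x : ℂ) / 2))) := by
            rw [Complex.exp_add, Complex.exp_add]
            ring
        _ = _ := by
            rw [show (-((s : ℂ) + (x : ℂ))) + (-(s : ℂ))
                + (-2 * Real.pi * Complex.I * ξ * ((s : ℂ) + (x : ℂ) / 2))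
              = (-(x : ℂ)) + (-2 * Real.pi * Complex.I * ξ * ((x : ℂ) / 2))
                + (-((2 : ℂ) + 2 * Real.pi * Complex.I * ξ) * (s : ℂ)) from by ring]
            rw [Complex.exp_add, Complex.exp_add]
            ring
    · rw [_root_.abs_of_neg hx, show s + -x / 2 + x / 2 = s from by ring,
        show s + -x / 2 - x / 2 = s - x from by ring]
      unfold fn
      rw [if_pos hs, if_pos (by linarith : (0 : ℝ) < s - x)]
      rw [map_mul, map_pow, Complex.conj_ofReal, ← Complex.exp_conj, map_neg,
        Complex.conj_ofReal]
      push_cast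
      calc (s : ℂ) ^ n * Complex.exp (-(s : ℂ))
            * (((s : ℂ) - (x : ℂ)) ^ n * Complex.exp (-((s : ℂ) - (x : ℂ))))
            * Complex.exp (-2 * Real.pi * Complex.I * ξ * ((s : ℂ) + -(x : ℂ) / 2))
          = (s : ℂ) ^ n * ((s : ℂ) + -(x : ℂ)) ^ n
            * Complex.exp ((-(s : ℂ)) + (-((s : ℂ) - (x : ℂ)))
              + (-2 * Real.pi * Complex.I * ξ * ((s : ℂ) + -(x : ℂ) / 2))) := by
            rw [Complex.exp_add, Complex.exp_add]
            ring
        _ = _ := by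
            rw [show (-(s : ℂ)) + (-((s : ℂ) - (x : ℂ)))
                + (-2 * Real.pi * Complex.I * ξ * ((s : ℂ) + -(x : ℂ) / 2))
              = (-(-(x : ℂ))) + (-2 * Real.pi * Complex.I * ξ * (-(x : ℂ) / 2))
                + (-((2 : ℂ) + 2 * Real.pi * Complex.I * ξ) * (s : ℂ)) from by ring]
            rw [Complex.exp_add, Complex.exp_add]
            ring

end Aux

theorem ambiguity_fn_ne_zero (n : ℕ) :
    ∀ x ξ : ℝ, ambiguity (fn n) (fn n) x ξ ≠ 0 := by
  intro x ξ
  have hz : 0 < ((2 : ℂ) + 2 * Real.pi * Complex.I * ξ).re := by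
    have : ((2 : ℂ) + 2 * Real.pi * Complex.I * ξ).re = 2 := by
      simp [Complex.add_re, Complex.mul_re, Complex.mul_im]
    rw [this]
    norm_num
  have hz0 : ((2 : ℂ) + 2 * Real.pi * Complex.I * ξ) ≠ 0 :=
    fun h => by rw [h] at hz; simp at hz
  have step1 : ambiguity (fn n) (fn n) x ξ
      = ∫ s : ℝ, fn n (s + |x| / 2 + x / 2) * (starRingEnd ℂ) (fn n (s + |x| / 2 - x / 2)) *
          Complex.exp (-2 * Real.pi * Complex.I * ξ * ((s + |x| / 2 : ℝ) : ℂ)) := by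
    rw [ambiguity]
    exact (integral_add_right_eq_self (μ := volume) (fun t : ℝ => fn n (t + x / 2) *
      (starRingEnd ℂ) (fn n (t - x / 2)) * Complex.exp (-2 * Real.pi * Complex.I * ξ * t))
      (|x| / 2)).symm
  rw [step1]
  simp_rw [fn_shift n x ξ]
  rw [MeasureTheory.integral_indicator measurableSet_Ioi, MeasureTheory.integral_const_mul,
    integral_prod_pow n |x| hz]
  apply mul_ne_zero (mul_ne_zero (Complex.exp_ne_zero _) (Complex.exp_ne_zero _))
  apply div_ne_zero ?_ (pow_ne_zero _ hz0)
  rcases (abs_nonneg x).eq_or_lt' with h0 | hpos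
  · rw [h0]
    rw [show ((0 : ℝ) : ℂ) * ((2 : ℂ) + 2 * Real.pi * Complex.I * ξ) = 0 from by simp]
    rw [Pb_zero_arg]
    exact Nat.cast_ne_zero.mpr (Nat.factorial_ne_zero _)
  · refine (Pb_pos n _ ?_).1
    rw [Complex.re_ofReal_mul]
    exact mul_pos hpos hz
end

section
/- Let n ≥ 1, let 0 = a_1 < a_2 < ⋯ < a_n < a_{n+1} = 1, and let c_1, …, c_n be real numbers satisfying either c_1 > c_2 > ⋯ > c_n > 0 or 0 < c_1 < c_2 < ⋯ < c_n. Define f on (0,1) by f(x) = Σ_{k=1}^n c_k·1_{(a_k,a_{k+1})}(x). Then there exists ξ ∈ ℝ such that ∫_0^1 f(x)·e^{−2πixξ} dx = 0 if and only if a_2, …, a_n are all rational. -/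
open MeasureTheory Complex


lemma int_step (n : ℕ) (a c : ℕ → ℝ)
    (hb : ∀ k ∈ Finset.Icc 1 n, 0 ≤ a k ∧ a k ≤ a (k+1) ∧ a (k+1) ≤ 1) (ξ : ℝ) :
    (∫ x in (0:ℝ)..1,
      ((∑ k ∈ Finset.Icc 1 n,
          Set.indicator (Set.Ioo (a k) (a (k + 1))) (fun _ => c k) x : ℝ) : ℂ) *
        Complex.exp (-2 * Real.pi * Complex.I * x * ξ))
    = ∑ k ∈ Finset.Icc 1 n, (c k : ℂ) *
        ∫ x in (a k)..(a (k+1)), Complex.exp (-2 * Real.pi * Complex.I * x * ξ) := by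
  set E : ℝ → ℂ := fun x => Complex.exp (-2 * Real.pi * Complex.I * x * ξ) with hE
  have hEcont : Continuous E := by
    apply Complex.continuous_exp.comp
    fun_prop
  have hpt : ∀ x : ℝ,
      ((∑ k ∈ Finset.Icc 1 n,
          Set.indicator (Set.Ioo (a k) (a (k + 1))) (fun _ => c k) x : ℝ) : ℂ) * E x
      = ∑ k ∈ Finset.Icc 1 n,
          Set.indicator (Set.Ioo (a k) (a (k + 1))) (fun y => (c k : ℂ) * E y) x := by
    intro x
    push_cast
    rw [Finset.sum_mul]
    refine Finset.sum_congr rfl fun k _ => ?_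
    by_cases hx : x ∈ Set.Ioo (a k) (a (k+1)) <;>
      simp [Set.indicator_of_mem, Set.indicator_of_notMem, hx]
  have hint : ∀ k ∈ Finset.Icc 1 n,
      Integrable (fun x => Set.indicator (Set.Ioo (a k) (a (k + 1)))
        (fun y => (c k : ℂ) * E y) x) := by
    intro k _
    exact (((continuous_const.mul hEcont).integrableOn_Icc (a := a k) (b := a (k+1))).mono_set Set.Ioo_subset_Icc_self).integrable_indicator measurableSet_Ioo
  calc (∫ x in (0:ℝ)..1,
      ((∑ k ∈ Finset.Icc 1 n,
          Set.indicator (Set.Ioo (a k) (a (k + 1))) (fun _ => c k) x : ℝ) : ℂ) * E x)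
      = ∫ x in (0:ℝ)..1, ∑ k ∈ Finset.Icc 1 n,
          Set.indicator (Set.Ioo (a k) (a (k + 1))) (fun y => (c k : ℂ) * E y) x := by
        simp only [hpt]
    _ = ∑ k ∈ Finset.Icc 1 n, ∫ x in (0:ℝ)..1,
          Set.indicator (Set.Ioo (a k) (a (k + 1))) (fun y => (c k : ℂ) * E y) x := by
        exact intervalIntegral.integral_finset_sum
          (fun k hk => (hint k hk).intervalIntegrable)
    _ = ∑ k ∈ Finset.Icc 1 n, (c k : ℂ) * ∫ x in (a k)..(a (k+1)), E x := by
        refine Finset.sum_congr rfl fun k hk => ?_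
        obtain ⟨h0, h1, h2⟩ := hb k hk
        have hsub : Set.Ioo (a k) (a (k+1)) ⊆ Set.Ioc 0 1 := by
          intro x hx
          exact ⟨lt_of_le_of_lt h0 hx.1, hx.2.le.trans h2⟩
        rw [intervalIntegral.integral_of_le (by norm_num), setIntegral_indicator measurableSet_Ioo,
          Set.inter_eq_self_of_subset_right hsub,
          ← integral_Ioc_eq_integral_Ioo, ← intervalIntegral.integral_of_le h1,
          intervalIntegral.integral_const_mul]

lemma key_cos {ι : Type*} (s : Finset ι) (w θ : ι → ℝ) (hw : ∀ i ∈ s, 0 ≤ w i)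
    (h : ∑ i ∈ s, (w i : ℂ) * Complex.exp ((θ i : ℂ) * Complex.I)
        = ((∑ i ∈ s, w i : ℝ) : ℂ)) :
    ∀ i ∈ s, 0 < w i → Real.cos (θ i) = 1 := by
  have hre : ∑ i ∈ s, w i * Real.cos (θ i) = ∑ i ∈ s, w i := by
    have h2 := congrArg Complex.re h
    rw [Complex.re_sum] at h2
    simpa [Complex.mul_re, Complex.exp_ofReal_mul_I_re] using h2
  have hz : ∑ i ∈ s, w i * (1 - Real.cos (θ i)) = 0 := by
    have h3 : ∑ i ∈ s, (w i - w i * Real.cos (θ i)) = 0 := by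
      rw [Finset.sum_sub_distrib, hre]; ring
    simpa [mul_sub] using h3
  intro i hi hwi
  have h4 := (Finset.sum_eq_zero_iff_of_nonneg (fun j hj => mul_nonneg (hw j hj)
    (by nlinarith [Real.cos_le_one (θ j)]))).mp hz i hi
  rcases mul_eq_zero.mp h4 with h5 | h5
  · linarith
  · linarith

lemma tele (c : ℕ → ℝ) : ∀ n, 1 ≤ n → ∑ k ∈ Finset.Icc 2 n, (c (k-1) - c k) = c 1 - c n := by
  intro n hn
  induction n with
  | zero => omega
  | succ m ih =>
    rcases Nat.lt_or_ge 1 (m+1) with h | h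
    · have h1m : 1 ≤ m := by omega
      rw [Finset.sum_Icc_succ_top (by omega), ih h1m]
      simp
    · have : m = 0 := by omega
      subst this
      simp
lemma mono_le (n : ℕ) (a : ℕ → ℝ) (h : ∀ k, 1 ≤ k → k ≤ n → a k < a (k+1)) :
    ∀ i j, 1 ≤ i → i ≤ j → j ≤ n + 1 → a i ≤ a j := by
  intro i j h1 hij hj
  induction j with
  | zero => omega
  | succ m ih =>
    rcases Nat.eq_or_lt_of_le hij with rfl | hlt
    · exact le_refl _
    · exact (ih (by omega) (by omega)).trans (h m (by omega) (by omega)).le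

lemma cpos_dec (n : ℕ) (c : ℕ → ℝ) (hd : ∀ k, 1 ≤ k → k < n → c (k+1) < c k)
    (hcn : 0 < c n) : ∀ k, 1 ≤ k → k ≤ n → 0 < c k := by
  have key : ∀ d k, 1 ≤ k → k + d = n → c n ≤ c k := by
    intro d
    induction d with
    | zero =>
      intro k h1 h2
      have : k = n := by omega
      rw [this]
    | succ m ih =>
      intro k h1 h2
      have h3 := hd k h1 (by omega)
      have h4 := ih (k+1) (by omega) (by omega)
      linarith
  intro k h1 h2
  have := key (n - k) k h1 (by omega)
  linarith

lemma cpos_inc (n : ℕ) (c : ℕ → ℝ) (hd : ∀ k, 1 ≤ k → k < n → c k < c (k+1))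
    (hc1 : 0 < c 1) : ∀ k, 1 ≤ k → k ≤ n → 0 < c k := by
  intro k
  induction k with
  | zero => omega
  | succ m ih =>
    intro _ hk
    rcases Nat.lt_or_ge 0 m with h | h
    · have h3 := hd m (by omega) (by omega)
      have h4 := ih (by omega) (by omega)
      linarith
    · have : m = 0 := by omega
      subst this
      exact hc1

theorem step_function_fourier_zero_iff_rational (n : ℕ) (hn : 1 ≤ n)
    (a c : ℕ → ℝ) (ha1 : a 1 = 0) (han : a (n + 1) = 1)
    (hamono : ∀ k, 1 ≤ k → k ≤ n → a k < a (k + 1))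
    (hc : ((∀ k, 1 ≤ k → k < n → c (k + 1) < c k) ∧ 0 < c n) ∨
          ((∀ k, 1 ≤ k → k < n → c k < c (k + 1)) ∧ 0 < c 1)) :
    (∃ ξ : ℝ, ∫ x in (0 : ℝ)..1,
        ((∑ k ∈ Finset.Icc 1 n,
          Set.indicator (Set.Ioo (a k) (a (k + 1))) (fun _ => c k) x : ℝ) : ℂ) *
          Complex.exp (-2 * Real.pi * Complex.I * x * ξ) = 0) ↔
      (∀ k, 2 ≤ k → k ≤ n → ∃ q : ℚ, a k = q) := by
  have hle := mono_le n a hamono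
  have hb : ∀ k ∈ Finset.Icc 1 n, 0 ≤ a k ∧ a k ≤ a (k+1) ∧ a (k+1) ≤ 1 := by
    intro k hk
    simp only [Finset.mem_Icc] at hk
    refine ⟨ha1 ▸ hle 1 k le_rfl hk.1 (by omega), (hamono k hk.1 hk.2).le,
      han ▸ hle (k+1) (n+1) (by omega) (by omega) le_rfl⟩
  have hcpos : ∀ k, 1 ≤ k → k ≤ n → 0 < c k := by
    rcases hc with ⟨hd, hcn⟩ | ⟨hd, hc1⟩
    · exact cpos_dec n c hd hcn
    · exact cpos_inc n c hd hc1
  constructor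
  · rintro ⟨ξ, hξ⟩
    rw [int_step n a c hb ξ] at hξ
    by_cases hξ0 : ξ = 0
    · -- contradiction : integral at 0 is positive
      exfalso
      subst hξ0
      have hpt : ∀ x : ℝ, Complex.exp (-2 * Real.pi * Complex.I * x * (0:ℝ)) = 1 := by
        intro x; push_cast; rw [mul_zero, Complex.exp_zero]
      simp only [hpt, intervalIntegral.integral_const, real_smul, smul_eq_mul, mul_one] at hξ
      have hre : ∑ k ∈ Finset.Icc 1 n, c k * (a (k+1) - a k) = 0 := by
        exact_mod_cast hξ
      have hpos : 0 < ∑ k ∈ Finset.Icc 1 n, c k * (a (k+1) - a k) := by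
        apply Finset.sum_pos
        · intro k hk
          simp only [Finset.mem_Icc] at hk
          exact mul_pos (hcpos k hk.1 hk.2) (sub_pos.mpr (hamono k hk.1 hk.2))
        · exact ⟨1, by simp [Finset.mem_Icc]; omega⟩
      linarith
    · -- main case
      set cc : ℂ := -2 * Real.pi * Complex.I * ξ with hccdef
      have hcc : cc ≠ 0 := by
        apply mul_ne_zero
        apply mul_ne_zero
        · apply mul_ne_zero
          · norm_num
          · exact_mod_cast Complex.ofReal_ne_zero.mpr Real.pi_ne_zero
        · exact Complex.I_ne_zero
        · exact Complex.ofReal_ne_zero.mpr hξ0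
      have hEx : ∀ x : ℝ, Complex.exp (-2 * Real.pi * Complex.I * x * ξ)
          = Complex.exp (cc * x) := by
        intro x; congr 1; rw [hccdef]; ring
      simp only [hEx, _root_.integral_exp_mul_complex hcc] at hξ
      have hS' : ∑ k ∈ Finset.Icc 1 n,
          (c k : ℂ) * (Complex.exp (cc * a (k+1)) - Complex.exp (cc * a k)) = 0 := by
        simp only [← mul_div_assoc, ← Finset.sum_div] at hξ
        rcases div_eq_zero_iff.mp hξ with h | h
        · exact h
        · exact absurd h hcc
      have hsplit1 : Finset.Icc 1 n = insert 1 (Finset.Icc 2 n) := by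
        ext x; simp only [Finset.mem_Icc, Finset.mem_insert]; omega
      have hsplit2 : Finset.Icc 2 (n+1) = insert (n+1) (Finset.Icc 2 n) := by
        ext x; simp only [Finset.mem_Icc, Finset.mem_insert]; omega
      have h1mem : (1:ℕ) ∉ Finset.Icc 2 n := by simp
      have hn1mem : n + 1 ∉ Finset.Icc 2 n := by simp
      have hre : ∑ k ∈ Finset.Icc 1 n, (c k : ℂ) * Complex.exp (cc * a (k+1))
          = ∑ k ∈ Finset.Icc 2 (n+1), (c (k-1) : ℂ) * Complex.exp (cc * a k) := by
        rw [show Finset.Icc 2 (n+1) = (Finset.Icc 1 n).map (addRightEmbedding 1) by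
          rw [Finset.map_add_right_Icc], Finset.sum_map]
        simp [addRightEmbedding_apply, Nat.add_sub_cancel]
      have hF1 : Complex.exp (cc * (a 1 : ℝ)) = 1 := by
        rw [ha1]; simp
      have hG : (c n : ℂ) * Complex.exp (cc * a (n+1)) +
          ∑ k ∈ Finset.Icc 2 n, ((c (k-1) : ℂ) - c k) * Complex.exp (cc * a k)
          = c 1 := by
        have e1 : ∑ k ∈ Finset.Icc 1 n,
            (c k : ℂ) * (Complex.exp (cc * a (k+1)) - Complex.exp (cc * a k))
            = ((c n : ℂ) * Complex.exp (cc * a (n+1)) +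
              ∑ k ∈ Finset.Icc 2 n, ((c (k-1) : ℂ) - c k) * Complex.exp (cc * a k))
              - (c 1 : ℂ) * Complex.exp (cc * a 1) := by
          simp only [mul_sub, Finset.sum_sub_distrib]
          rw [hre, hsplit2, Finset.sum_insert hn1mem]
          conv_lhs => rw [hsplit1]
          rw [Finset.sum_insert h1mem]
          simp only [sub_mul, Finset.sum_sub_distrib, Nat.add_sub_cancel]
          ring
        rw [e1, hF1, mul_one, sub_eq_zero] at hS'
        exact hS'
      have main : (∃ p : ℤ, (ξ:ℝ) = p) ∧ (∀ k, 2 ≤ k → k ≤ n → ∃ m : ℤ, a k * ξ = m) := by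
        rcases hc with ⟨hd, hcn⟩ | ⟨hd, hc1⟩
        · -- decreasing case
          set w : ℕ → ℝ := fun k => if k = n+1 then c n else c (k-1) - c k with hw
          set θf : ℕ → ℝ := fun k => -2*Real.pi*(a k)*ξ with hθ
          have hexp : ∀ k, Complex.exp (cc * (a k : ℝ)) = Complex.exp ((θf k : ℂ) * I) := by
            intro k; congr 1; rw [hccdef, hθ]; push_cast; ring
          have hsumw : ∑ k ∈ Finset.Icc 2 (n+1), w k = c 1 := by
            rw [hsplit2, Finset.sum_insert hn1mem]
            have e0 : ∑ k ∈ Finset.Icc 2 n, w k = ∑ k ∈ Finset.Icc 2 n, (c (k-1) - c k) := by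
              refine Finset.sum_congr rfl (fun k hk => ?_)
              simp only [Finset.mem_Icc] at hk
              simp only [hw, if_neg (by omega : ¬ k = n+1)]
            rw [e0, tele c n hn]
            simp only [hw, if_pos rfl]; ring
          have hwnn : ∀ k ∈ Finset.Icc 2 (n+1), 0 ≤ w k := by
            intro k hk
            simp only [Finset.mem_Icc] at hk
            by_cases h : k = n+1
            · simp only [hw, if_pos h]; exact hcn.le
            · simp only [hw, if_neg h]
              have := hd (k-1) (by omega) (by omega)
              have hk1 : k - 1 + 1 = k := by omega
              rw [hk1] at this
              linarith
          have heq : ∑ k ∈ Finset.Icc 2 (n+1), (w k : ℂ) * Complex.exp ((θf k : ℂ) * I)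
              = ((∑ k ∈ Finset.Icc 2 (n+1), w k : ℝ) : ℂ) := by
            rw [hsumw, hsplit2, Finset.sum_insert hn1mem]
            have e2 : ∀ k ∈ Finset.Icc 2 n, (w k:ℂ) * Complex.exp ((θf k:ℂ)*I)
                = ((c (k-1):ℂ) - c k) * Complex.exp (cc * a k) := by
              intro k hk
              simp only [Finset.mem_Icc] at hk
              rw [← hexp k]
              simp only [hw, if_neg (by omega : ¬ k = n+1)]
              push_cast; ring
            rw [Finset.sum_congr rfl e2, ← hexp (n+1)]
            simp only [hw, if_pos rfl]
            exact hG
          have hcos := key_cos _ w θf hwnn heq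
          constructor
          · have h1 := hcos (n+1) (by simp only [Finset.mem_Icc]; omega)
              (by simp only [hw, if_pos rfl]; exact hcn)
            simp only [hθ] at h1
            obtain ⟨m, hm⟩ := (Real.cos_eq_one_iff _).mp h1
            rw [han] at hm
            refine ⟨-m, ?_⟩
            have hπ : (2:ℝ) * Real.pi ≠ 0 := by
              have := Real.pi_ne_zero; positivity
            have h2 : (2*Real.pi) * (ξ + m) = 0 := by linear_combination hm
            have := mul_eq_zero.mp h2
            rcases this with h | h
            · exact absurd h hπ
            · push_cast; linarith
          · intro k hk2 hkn
            have h1 := hcos k (by simp only [Finset.mem_Icc]; omega)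
              (by simp only [hw, if_neg (by omega : ¬ k = n+1)]
                  have := hd (k-1) (by omega) (by omega)
                  have hk1 : k - 1 + 1 = k := by omega
                  rw [hk1] at this; linarith)
            simp only [hθ] at h1
            obtain ⟨m, hm⟩ := (Real.cos_eq_one_iff _).mp h1
            refine ⟨-m, ?_⟩
            have hπ : (2:ℝ) * Real.pi ≠ 0 := by
              have := Real.pi_ne_zero; positivity
            have h2 : (2*Real.pi) * (a k * ξ + m) = 0 := by linear_combination hm
            rcases mul_eq_zero.mp h2 with h | h
            · exact absurd h hπ
            · push_cast; linarith
        · -- increasing case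
          set w : ℕ → ℝ := fun k => if k = 1 then c 1 else c k - c (k-1) with hw
          set θf : ℕ → ℝ := fun k => 2*Real.pi*(1 - a k)*ξ with hθ
          have hexp2 : ∀ k, Complex.exp (cc * (a k:ℝ)) * Complex.exp (-cc)
              = Complex.exp ((θf k:ℂ) * I) := by
            intro k; rw [← Complex.exp_add]; congr 1; rw [hccdef, hθ]; push_cast; ring
          have hsumw : ∑ k ∈ Finset.Icc 1 n, w k = c n := by
            rw [hsplit1, Finset.sum_insert h1mem]
            have e0 : ∑ k ∈ Finset.Icc 2 n, w k = ∑ k ∈ Finset.Icc 2 n, (c k - c (k-1)) := by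
              refine Finset.sum_congr rfl (fun k hk => ?_)
              simp only [Finset.mem_Icc] at hk
              simp only [hw, if_neg (by omega : ¬ k = 1)]
            have e1 : ∑ k ∈ Finset.Icc 2 n, (c k - c (k-1))
                = - ∑ k ∈ Finset.Icc 2 n, (c (k-1) - c k) := by
              rw [← Finset.sum_neg_distrib]
              exact Finset.sum_congr rfl (fun k _ => by ring)
            rw [e0, e1, tele c n hn]
            simp only [hw, if_pos rfl]; ring
          have hwnn : ∀ k ∈ Finset.Icc 1 n, 0 ≤ w k := by
            intro k hk
            simp only [Finset.mem_Icc] at hk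
            by_cases h : k = 1
            · simp only [hw, if_pos h]; exact hc1.le
            · simp only [hw, if_neg h]
              have := hd (k-1) (by omega) (by omega)
              have hk1 : k - 1 + 1 = k := by omega
              rw [hk1] at this
              linarith
          have hcexp1 : Complex.exp (cc * ((a (n+1)):ℝ)) * Complex.exp (-cc) = 1 := by
            rw [han, Complex.ofReal_one, mul_one, ← Complex.exp_add, add_neg_cancel,
              Complex.exp_zero]
          have hmul : (c n:ℂ) * (Complex.exp (cc * a (n+1)) * Complex.exp (-cc)) +
              ∑ k ∈ Finset.Icc 2 n, ((c (k-1):ℂ) - c k) *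
                (Complex.exp (cc * a k) * Complex.exp (-cc))
              = (c 1:ℂ) * Complex.exp (-cc) := by
            calc (c n:ℂ) * (Complex.exp (cc * a (n+1)) * Complex.exp (-cc)) +
                ∑ k ∈ Finset.Icc 2 n, ((c (k-1):ℂ) - c k) *
                  (Complex.exp (cc * a k) * Complex.exp (-cc))
                = ((c n:ℂ) * Complex.exp (cc * a (n+1)) +
                  ∑ k ∈ Finset.Icc 2 n, ((c (k-1):ℂ) - c k) * Complex.exp (cc * a k))
                  * Complex.exp (-cc) := by
                  rw [add_mul, Finset.sum_mul]
                  simp only [mul_assoc]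
              _ = (c 1:ℂ) * Complex.exp (-cc) := by rw [hG]
          rw [hcexp1, mul_one] at hmul
          have heq : ∑ k ∈ Finset.Icc 1 n, (w k : ℂ) * Complex.exp ((θf k : ℂ) * I)
              = ((∑ k ∈ Finset.Icc 1 n, w k : ℝ) : ℂ) := by
            rw [hsumw, hsplit1, Finset.sum_insert h1mem]
            have e2 : ∀ k ∈ Finset.Icc 2 n, (w k:ℂ) * Complex.exp ((θf k:ℂ)*I)
                = ((c k:ℂ) - c (k-1)) * (Complex.exp (cc * a k) * Complex.exp (-cc)) := by
              intro k hk
              simp only [Finset.mem_Icc] at hk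
              rw [← hexp2 k]
              simp only [hw, if_neg (by omega : ¬ k = 1)]
              push_cast; ring
            rw [Finset.sum_congr rfl e2, ← hexp2 1]
            simp only [hw, if_pos rfl]
            rw [hF1, one_mul]
            have e3 : ∑ k ∈ Finset.Icc 2 n, ((c k:ℂ) - c (k-1)) *
                (Complex.exp (cc * a k) * Complex.exp (-cc))
                = - ∑ k ∈ Finset.Icc 2 n, ((c (k-1):ℂ) - c k) *
                  (Complex.exp (cc * a k) * Complex.exp (-cc)) := by
              rw [← Finset.sum_neg_distrib]
              exact Finset.sum_congr rfl (fun k _ => by ring)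
            rw [e3]
            linear_combination -hmul
          have hcos := key_cos _ w θf hwnn heq
          have hπ : (2:ℝ) * Real.pi ≠ 0 := by
            have := Real.pi_ne_zero; positivity
          have hp : ∃ p : ℤ, (ξ:ℝ) = p := by
            have h1 := hcos 1 (by simp only [Finset.mem_Icc]; omega)
              (by simp only [hw, if_pos rfl]; exact hc1)
            simp only [hθ] at h1
            rw [ha1] at h1
            obtain ⟨m, hm⟩ := (Real.cos_eq_one_iff _).mp h1
            refine ⟨m, ?_⟩
            have h2 : (2*Real.pi) * (ξ - m) = 0 := by linear_combination -hm
            rcases mul_eq_zero.mp h2 with h | h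
            · exact absurd h hπ
            · linarith
          refine ⟨hp, ?_⟩
          obtain ⟨p, hpp⟩ := hp
          intro k hk2 hkn
          have h1 := hcos k (by simp only [Finset.mem_Icc]; omega)
            (by simp only [hw, if_neg (by omega : ¬ k = 1)]
                have := hd (k-1) (by omega) (by omega)
                have hk1 : k - 1 + 1 = k := by omega
                rw [hk1] at this; linarith)
          simp only [hθ] at h1
          obtain ⟨m, hm⟩ := (Real.cos_eq_one_iff _).mp h1
          refine ⟨p - m, ?_⟩
          have h2 : (2*Real.pi) * ((1 - a k) * ξ - m) = 0 := by linear_combination -hm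
          rcases mul_eq_zero.mp h2 with h | h
          · exact absurd h hπ
          · push_cast
            rw [hpp] at h ⊢
            linarith
      obtain ⟨⟨p, hp⟩, hm⟩ := main
      have hp0 : (p:ℝ) ≠ 0 := by rw [← hp]; exact_mod_cast hξ0
      intro k hk2 hkn
      obtain ⟨m, hm'⟩ := hm k hk2 hkn
      refine ⟨(m:ℚ)/(p:ℚ), ?_⟩
      rw [hp] at hm'
      push_cast
      field_simp
      linarith
  · -- backward direction
    intro hrat
    classical
    have hden : ∃ N : ℕ, 0 < N ∧ ∀ k, 2 ≤ k → k ≤ n → ∃ m : ℤ, a k * N = m := by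
      set q : ℕ → ℚ := fun k => if h : 2 ≤ k ∧ k ≤ n then (hrat k h.1 h.2).choose else 0
        with hqdef
      refine ⟨∏ k ∈ Finset.Icc 2 n, (q k).den,
        Finset.prod_pos (fun k _ => (q k).pos), ?_⟩
      intro k h2 hkn
      have hq : a k = (q k : ℝ) := by
        simp only [hqdef, dif_pos (⟨h2, hkn⟩ : 2 ≤ k ∧ k ≤ n)]
        exact (hrat k h2 hkn).choose_spec
      obtain ⟨t, ht⟩ := Finset.dvd_prod_of_mem (fun j => (q j).den)
        (Finset.mem_Icc.mpr ⟨h2, hkn⟩)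
      refine ⟨(q k).num * t, ?_⟩
      rw [hq, ht, Rat.cast_def]
      have hd0 : ((q k).den : ℝ) ≠ 0 := Nat.cast_ne_zero.mpr (q k).den_nz
      push_cast
      field_simp
    obtain ⟨N, hN, hNk⟩ := hden
    have hall : ∀ k, 1 ≤ k → k ≤ n+1 → ∃ m : ℤ, a k * N = m := by
      intro k h1 h2
      by_cases hk1 : k = 1
      · exact ⟨0, by rw [hk1, ha1]; simp⟩
      by_cases hkn1 : k = n+1
      · exact ⟨N, by rw [hkn1, han]; simp⟩
      · exact hNk k (by omega) (by omega)
    refine ⟨(N:ℝ), ?_⟩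
    rw [int_step n a c hb _]
    have hNne : ((N:ℝ)) ≠ 0 := Nat.cast_ne_zero.mpr hN.ne'
    set cc : ℂ := -2 * Real.pi * Complex.I * ((N:ℝ):ℂ) with hccdef
    have hcc : cc ≠ 0 := by
      apply mul_ne_zero
      apply mul_ne_zero
      · apply mul_ne_zero
        · norm_num
        · exact_mod_cast Complex.ofReal_ne_zero.mpr Real.pi_ne_zero
      · exact Complex.I_ne_zero
      · exact Complex.ofReal_ne_zero.mpr hNne
    have hEx : ∀ x : ℝ, Complex.exp (-2 * Real.pi * Complex.I * x * ((N:ℝ):ℂ))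
        = Complex.exp (cc * x) := by
      intro x; congr 1; rw [hccdef]; ring
    simp only [hEx, _root_.integral_exp_mul_complex hcc]
    apply Finset.sum_eq_zero
    intro k hk
    simp only [Finset.mem_Icc] at hk
    have hone : ∀ j, 1 ≤ j → j ≤ n+1 → Complex.exp (cc * ((a j : ℝ):ℂ)) = 1 := by
      intro j h1 h2
      obtain ⟨m, hm⟩ := hall j h1 h2
      have hmc : ((a j : ℝ):ℂ) * (N:ℂ) = (m:ℂ) := by exact_mod_cast hm
      have harg : cc * ((a j : ℝ):ℂ) = ((-m : ℤ):ℂ) * (2 * Real.pi * Complex.I) := by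
        rw [hccdef]; push_cast
        linear_combination (-2 * (Real.pi:ℂ) * Complex.I) * hmc
      rw [harg, Complex.exp_int_mul_two_pi_mul_I]
    rw [hone k hk.1 (by omega), hone (k+1) (by omega) (by omega), sub_self, zero_div,
      mul_zero]
end

section
/- Let α ∈ (0,1) be irrational and let b, c, d be real numbers with 0 < b < d and 0 < c < d. For a ∈ (0, 1−α) define f_a(t) = b·1_{(0,a)}(t) + d·1_{(a,a+α)}(t) + c·1_{(a+α,1)}(t). Then there exist a ∈ (0, 1−α) and ξ ∈ ℝ such that the Fourier transform of f_a vanishes at ξ: ∫_ℝ f_a(t)·e^{−2πitξ} dt = 0. -/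
open MeasureTheory Complex

private lemma irr_ne' (α : ℝ) (hirr : Irrational α) (m n : ℤ) (hn : n ≠ 0) :
    α * n ≠ m := by
  intro h
  have hnR : (n : ℝ) ≠ 0 := Int.cast_ne_zero.mpr hn
  have hα : α = (m : ℝ) / (n : ℝ) := by
    field_simp
    linarith [h]
  refine Rat.not_irrational ((m : ℚ) / (n : ℚ)) ?_
  have hcast : (((m : ℚ) / (n : ℚ) : ℚ) : ℝ) = α := by push_cast; rw [hα]
  rwa [hcast]

private lemma normSq_aux (x y θ : ℝ) :
    Complex.normSq ((x : ℂ) + (y : ℂ) * Complex.exp ((θ : ℂ) * Complex.I))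
      = x ^ 2 + y ^ 2 + 2 * x * y * Real.cos θ := by
  have hre : ((x : ℂ) + (y : ℂ) * Complex.exp ((θ : ℂ) * Complex.I)).re
      = x + y * Real.cos θ := by
    simp [Complex.add_re, Complex.mul_re, Complex.exp_ofReal_mul_I_re,
      Complex.exp_ofReal_mul_I_im]
  have him : ((x : ℂ) + (y : ℂ) * Complex.exp ((θ : ℂ) * Complex.I)).im
      = y * Real.sin θ := by
    simp [Complex.add_im, Complex.mul_im, Complex.exp_ofReal_mul_I_re,
      Complex.exp_ofReal_mul_I_im]
  rw [Complex.normSq_apply, hre, him]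
  nlinarith [Real.sin_sq_add_cos_sq θ]

private lemma exists_xi (α : ℝ) (hα0 : 0 < α) (hα1 : α < 1) (hirr : Irrational α)
    (b c d : ℝ) (hb : 0 < b) (hbd : b < d) (hc : 0 < c) (hcd : c < d) :
    ∃ ξ : ℝ, 1 / (1 - α) < ξ ∧
      (d - b) ^ 2 + (c - d) ^ 2 + 2 * (d - b) * (c - d) * Real.cos (-2 * Real.pi * ξ * α)
        = (-b) ^ 2 + c ^ 2 + 2 * (-b) * c * Real.cos (-2 * Real.pi * ξ) := by
  have hπ : 0 < Real.pi := Real.pi_pos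
  set f : ℝ → ℝ := fun ξ =>
    ((d - b) ^ 2 + (c - d) ^ 2 + 2 * (d - b) * (c - d) * Real.cos (-2 * Real.pi * ξ * α))
      - ((-b) ^ 2 + c ^ 2 + 2 * (-b) * c * Real.cos (-2 * Real.pi * ξ)) with hf
  have hcont : Continuous f := by
    apply Continuous.sub
    · exact continuous_const.add (continuous_const.mul
        (Real.continuous_cos.comp (by continuity)))
    · exact continuous_const.add (continuous_const.mul
        (Real.continuous_cos.comp (by continuity)))
  set n : ℕ := ⌈1 / (1 - α)⌉₊ + 1 with hn
  have hngt : 1 / (1 - α) < (n : ℝ) := by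
    have h1 := Nat.le_ceil (1 / (1 - α))
    have : (⌈1 / (1 - α)⌉₊ : ℝ) < (n : ℝ) := by rw [hn]; push_cast; linarith
    linarith
  have hnpos : 0 < n := by omega
  have hnRpos : 0 < (n : ℝ) := by
    have : (0:ℝ) < 1 / (1 - α) := div_pos one_pos (by linarith)
    linarith
  set k : ℕ := ⌈(n : ℝ) * α⌉₊ + 1 with hk
  have hkgt : (n : ℝ) * α < (k : ℝ) := by
    have h1 := Nat.le_ceil ((n : ℝ) * α)
    have : (⌈(n : ℝ) * α⌉₊ : ℝ) < (k : ℝ) := by rw [hk]; push_cast; linarith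
    linarith
  have hkpos : 0 < k := by omega
  have hkRpos : 0 < (k : ℝ) := by exact_mod_cast hkpos
  have hnk : (n : ℝ) < (k : ℝ) / α := (lt_div_iff₀ hα0).mpr hkgt
  clear_value n k
  -- f n > 0
  have hfn : 0 < f n := by
    have hcn : Real.cos (-2 * Real.pi * (n : ℝ)) = 1 := by
      rw [show -2 * Real.pi * (n : ℝ) = -((n : ℝ) * (2 * Real.pi)) by ring, Real.cos_neg,
        Real.cos_nat_mul_two_pi]
    have ht1 : Real.cos (-2 * Real.pi * (n : ℝ) * α) ≤ 1 := Real.cos_le_one _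
    have ht2 : Real.cos (-2 * Real.pi * (n : ℝ) * α) ≠ 1 := by
      intro h
      rw [Real.cos_eq_one_iff] at h
      obtain ⟨m, hm⟩ := h
      have h2 : ((-m : ℤ) : ℝ) * (2 * Real.pi) = (α * n) * (2 * Real.pi) := by
        push_cast; linear_combination -hm
      have h3 : α * ((n : ℤ) : ℝ) = ((-m : ℤ) : ℝ) := by
        have := mul_right_cancel₀ (by positivity : (2 * Real.pi) ≠ 0) h2
        push_cast at this ⊢
        linarith
      exact irr_ne' α hirr (-m) n (by exact_mod_cast hnpos.ne') h3
    have htlt : Real.cos (-2 * Real.pi * (n : ℝ) * α) < 1 := lt_of_le_of_ne ht1 ht2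
    rw [hf]
    simp only [hcn]
    nlinarith [mul_pos (mul_pos (sub_pos.2 hbd) (sub_pos.2 hcd)) (sub_pos.2 htlt)]
  -- f (k/α) < 0
  have hfk : f ((k : ℝ) / α) < 0 := by
    have hck : Real.cos (-2 * Real.pi * ((k : ℝ) / α) * α) = 1 := by
      rw [show -2 * Real.pi * ((k : ℝ) / α) * α = -((k : ℝ) / α * α * (2 * Real.pi)) by ring,
        div_mul_cancel₀ _ hα0.ne', Real.cos_neg, Real.cos_nat_mul_two_pi]
    have ht1 : Real.cos (-2 * Real.pi * ((k : ℝ) / α)) ≤ 1 := Real.cos_le_one _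
    have ht2 : Real.cos (-2 * Real.pi * ((k : ℝ) / α)) ≠ 1 := by
      intro h
      rw [Real.cos_eq_one_iff] at h
      obtain ⟨m, hm⟩ := h
      have h2 : ((-m : ℤ) : ℝ) * (2 * Real.pi) = ((k : ℝ) / α) * (2 * Real.pi) := by
        push_cast; linear_combination -hm
      have h3 : ((-m : ℤ) : ℝ) = (k : ℝ) / α :=
        mul_right_cancel₀ (by positivity : (2 * Real.pi) ≠ 0) h2
      have hm0 : (-m : ℤ) ≠ 0 := by
        intro h0
        rw [h0] at h3
        simp at h3
        have : (0:ℝ) < (k : ℝ) / α := div_pos hkRpos hα0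
        rw [← h3] at this
        exact lt_irrefl _ this
      have h4 : α * ((-m : ℤ) : ℝ) = ((k : ℤ) : ℝ) := by
        rw [h3]
        push_cast
        field_simp
      exact irr_ne' α hirr k (-m) hm0 h4
    have htlt : Real.cos (-2 * Real.pi * ((k : ℝ) / α)) < 1 := lt_of_le_of_ne ht1 ht2
    rw [hf]
    simp only [hck]
    nlinarith [mul_pos (mul_pos hb hc) (sub_pos.2 htlt)]
  -- IVT
  have hmem : (0 : ℝ) ∈ Set.Icc (f ((k : ℝ) / α)) (f n) := ⟨hfk.le, hfn.le⟩
  have := intermediate_value_Icc' hnk.le hcont.continuousOn hmem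
  obtain ⟨ξ, hξmem, hfξ⟩ := this
  refine ⟨ξ, lt_of_lt_of_le hngt hξmem.1, ?_⟩
  have : f ξ = 0 := hfξ
  rw [hf] at this
  simp only at this
  linarith [this]

private lemma exists_a (ξ : ℝ) (hξ : 0 < ξ) (α : ℝ) (h1 : 1 < ξ * (1 - α)) (z : ℂ)
    (hz : ‖z‖ = 1) :
    ∃ a : ℝ, a ∈ Set.Ioo 0 (1 - α) ∧
      Complex.exp (((-2 * Real.pi * ξ * a : ℝ) : ℂ) * Complex.I) = z := by
  have hπ : 0 < Real.pi := Real.pi_pos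
  set m : ℤ := ⌊z.arg / (2 * Real.pi)⌋ + 1 with hm
  set a : ℝ := (2 * Real.pi * m - z.arg) / (2 * Real.pi * ξ) with ha
  have hm1 : z.arg < 2 * Real.pi * m := by
    have h2 := Int.lt_floor_add_one (z.arg / (2 * Real.pi))
    have h3 : z.arg / (2 * Real.pi) < (m : ℝ) := by rw [hm]; push_cast; linarith
    have := (div_lt_iff₀ (by positivity : (0:ℝ) < 2 * Real.pi)).mp h3
    linarith
  have hm2 : 2 * Real.pi * m ≤ z.arg + 2 * Real.pi := by
    have h2 := Int.floor_le (z.arg / (2 * Real.pi))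
    have h3 : (m : ℝ) ≤ z.arg / (2 * Real.pi) + 1 := by rw [hm]; push_cast; linarith
    have := (le_div_iff₀ (by positivity : (0:ℝ) < 2 * Real.pi)).mp (by linarith : (m : ℝ) - 1 ≤ z.arg / (2 * Real.pi))
    linarith
  have ha0 : 0 < a := div_pos (by linarith) (by positivity)
  have ha1 : a < 1 - α := by
    rw [ha, div_lt_iff₀ (by positivity : (0:ℝ) < 2 * Real.pi * ξ)]
    nlinarith
  refine ⟨a, ⟨ha0, ha1⟩, ?_⟩
  have hexp : -2 * Real.pi * ξ * a = z.arg - 2 * Real.pi * m := by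
    rw [ha]
    field_simp
    ring
  rw [hexp]
  have hsplit : ((z.arg - 2 * Real.pi * m : ℝ) : ℂ) * Complex.I
      = (z.arg : ℂ) * Complex.I - (m : ℂ) * (2 * (Real.pi : ℂ) * Complex.I) := by
    push_cast; ring
  rw [hsplit, Complex.exp_sub, Complex.exp_int_mul_two_pi_mul_I, div_one]
  have h5 := Complex.norm_mul_exp_arg_mul_I z
  rwa [hz, Complex.ofReal_one, one_mul] at h5

private lemma piece_integrable (r p q : ℝ) (C : ℂ) :
    MeasureTheory.Integrable
      (fun t : ℝ => Set.indicator (Set.Ioo p q) (fun _ => (r : ℂ)) t * Complex.exp (C * t)) := by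
  have h1 : (fun t : ℝ => Set.indicator (Set.Ioo p q) (fun _ => (r : ℂ)) t * Complex.exp (C * t))
      = Set.indicator (Set.Ioo p q) (fun t : ℝ => (r : ℂ) * Complex.exp (C * t)) := by
    funext t
    by_cases h : t ∈ Set.Ioo p q <;> simp [h]
  rw [h1, MeasureTheory.integrable_indicator_iff measurableSet_Ioo]
  have hcont : Continuous fun t : ℝ => (r : ℂ) * Complex.exp (C * t) :=
    continuous_const.mul (Complex.continuous_exp.comp (continuous_const.mul
      Complex.continuous_ofReal))
  exact (hcont.integrableOn_Icc).mono_set Set.Ioo_subset_Icc_self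

private lemma piece_integral (r p q ξ : ℝ) (hpq : p ≤ q) (hξ : ξ ≠ 0) :
    ∫ t : ℝ, Set.indicator (Set.Ioo p q) (fun _ => (r : ℂ)) t
      * Complex.exp ((-2 * Real.pi * Complex.I * ξ) * t)
    = r * ((Complex.exp ((-2 * Real.pi * Complex.I * ξ) * q)
        - Complex.exp ((-2 * Real.pi * Complex.I * ξ) * p)) / (-2 * Real.pi * Complex.I * ξ)) := by
  set c0 : ℂ := -2 * Real.pi * Complex.I * ξ with hc0
  have hc0ne : c0 ≠ 0 := by
    simp [hc0, Real.pi_ne_zero, Complex.I_ne_zero, hξ, Complex.ofReal_eq_zero, sub_eq_zero]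
  have h1 : ∀ t : ℝ, Set.indicator (Set.Ioo p q) (fun _ => (r : ℂ)) t * Complex.exp (c0 * t)
      = Set.indicator (Set.Ioo p q) (fun t : ℝ => r * Complex.exp (c0 * t)) t := by
    intro t
    by_cases h : t ∈ Set.Ioo p q <;> simp [h]
  simp_rw [h1]
  rw [MeasureTheory.integral_indicator measurableSet_Ioo]
  rw [← MeasureTheory.integral_Ioc_eq_integral_Ioo, ← intervalIntegral.integral_of_le hpq]
  rw [intervalIntegral.integral_const_mul, integral_exp_mul_complex hc0ne]

private lemma integral_eval (b c d α a ξ : ℝ) (hξ : ξ ≠ 0) (ha : 0 ≤ a) (hα : 0 ≤ α)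
    (h1 : a + α ≤ 1) :
    (∫ t : ℝ,
        ((Set.indicator (Set.Ioo 0 a) (fun _ => b) t
          + Set.indicator (Set.Ioo a (a + α)) (fun _ => d) t
          + Set.indicator (Set.Ioo (a + α) 1) (fun _ => c) t : ℝ) : ℂ) *
        Complex.exp (-2 * Real.pi * Complex.I * t * ξ))
    = (b : ℂ) * ((Complex.exp ((-2 * Real.pi * Complex.I * ξ) * (a : ℝ))
          - Complex.exp ((-2 * Real.pi * Complex.I * ξ) * ((0 : ℝ) : ℂ)))
          / (-2 * Real.pi * Complex.I * ξ))
      + (d : ℂ) * ((Complex.exp ((-2 * Real.pi * Complex.I * ξ) * ((a + α : ℝ) : ℂ))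
          - Complex.exp ((-2 * Real.pi * Complex.I * ξ) * (a : ℝ)))
          / (-2 * Real.pi * Complex.I * ξ))
      + (c : ℂ) * ((Complex.exp ((-2 * Real.pi * Complex.I * ξ) * ((1 : ℝ) : ℂ))
          - Complex.exp ((-2 * Real.pi * Complex.I * ξ) * ((a + α : ℝ) : ℂ)))
          / (-2 * Real.pi * Complex.I * ξ)) := by
  set C : ℂ := -2 * Real.pi * Complex.I * ξ with hC
  have hpt : ∀ t : ℝ,
      ((Set.indicator (Set.Ioo 0 a) (fun _ => b) t
          + Set.indicator (Set.Ioo a (a + α)) (fun _ => d) t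
          + Set.indicator (Set.Ioo (a + α) 1) (fun _ => c) t : ℝ) : ℂ) *
        Complex.exp (-2 * Real.pi * Complex.I * t * ξ)
      = Set.indicator (Set.Ioo 0 a) (fun _ => (b : ℂ)) t * Complex.exp (C * t)
        + Set.indicator (Set.Ioo a (a + α)) (fun _ => (d : ℂ)) t * Complex.exp (C * t)
        + Set.indicator (Set.Ioo (a + α) 1) (fun _ => (c : ℂ)) t * Complex.exp (C * t) := by
    intro t
    have he : Complex.exp (-2 * Real.pi * Complex.I * t * ξ) = Complex.exp (C * t) := by
      rw [hC]; congr 1; ring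
    rw [he]
    by_cases h1' : t ∈ Set.Ioo (0:ℝ) a <;> by_cases h2' : t ∈ Set.Ioo a (a + α) <;>
      by_cases h3' : t ∈ Set.Ioo (a + α) (1:ℝ) <;>
      simp [h1', h2', h3'] <;> push_cast <;> ring
  rw [MeasureTheory.integral_congr_ae (Filter.Eventually.of_forall hpt)]
  have p1 := piece_integrable b 0 a C
  have p2 := piece_integrable d a (a + α) C
  have p3 := piece_integrable c (a + α) 1 C
  have p12 : MeasureTheory.Integrable (fun t : ℝ =>
      Set.indicator (Set.Ioo 0 a) (fun _ => (b : ℂ)) t * Complex.exp (C * t)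
        + Set.indicator (Set.Ioo a (a + α)) (fun _ => (d : ℂ)) t * Complex.exp (C * t)) := p1.add p2
  rw [MeasureTheory.integral_add p12 p3, MeasureTheory.integral_add p1 p2]
  rw [hC]
  rw [piece_integral b 0 a ξ ha hξ, piece_integral d a (a + α) ξ (by linarith) hξ,
    piece_integral c (a + α) 1 ξ (by linarith) hξ]

theorem exists_fourier_zero_nonmonotone_step (α : ℝ) (hα : α ∈ Set.Ioo (0 : ℝ) 1)
    (hirr : Irrational α) (b c d : ℝ)
    (hb : 0 < b) (hbd : b < d) (hc : 0 < c) (hcd : c < d) :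
    ∃ a ∈ Set.Ioo (0 : ℝ) (1 - α), ∃ ξ : ℝ,
      ∫ t : ℝ,
        ((Set.indicator (Set.Ioo 0 a) (fun _ => b) t
          + Set.indicator (Set.Ioo a (a + α)) (fun _ => d) t
          + Set.indicator (Set.Ioo (a + α) 1) (fun _ => c) t : ℝ) : ℂ) *
        Complex.exp (-2 * Real.pi * Complex.I * t * ξ) = 0 := by
  obtain ⟨hα0, hα1⟩ := hα
  have h1α : 0 < 1 - α := by linarith
  have hπ : 0 < Real.pi := Real.pi_pos
  obtain ⟨ξ, hξgt, hξeq⟩ := exists_xi α hα0 hα1 hirr b c d hb hbd hc hcd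
  have hξpos : 0 < ξ := lt_trans (by positivity) hξgt
  have hξ1 : 1 < ξ * (1 - α) := by
    have := (div_lt_iff₀ h1α).mp hξgt
    linarith
  set C : ℂ := -2 * Real.pi * Complex.I * ξ with hC
  set w : ℂ := Complex.exp (C * ((α : ℝ) : ℂ)) with hw
  set u : ℂ := Complex.exp (C * ((1 : ℝ) : ℂ)) with hu
  set A : ℂ := ((d - b : ℝ) : ℂ) + ((c - d : ℝ) : ℂ) * w with hA
  set B : ℂ := ((-b : ℝ) : ℂ) + ((c : ℝ) : ℂ) * u with hB
  -- normSq identity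
  have hwθ : C * ((α : ℝ) : ℂ) = ((-2 * Real.pi * ξ * α : ℝ) : ℂ) * Complex.I := by
    rw [hC]; push_cast; ring
  have huθ : C * ((1 : ℝ) : ℂ) = ((-2 * Real.pi * ξ : ℝ) : ℂ) * Complex.I := by
    rw [hC]; push_cast; ring
  have hns : Complex.normSq A = Complex.normSq B := by
    rw [hA, hB, hw, hu, hwθ, huθ, normSq_aux, normSq_aux]
    linarith [hξeq]
  -- find a with exp (C * a) * A = B
  have hmain : ∃ a : ℝ, a ∈ Set.Ioo 0 (1 - α) ∧
      Complex.exp (C * ((a : ℝ) : ℂ)) * A = B := by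
    by_cases hA0 : A = 0
    · have hB0 : B = 0 := by
        have : Complex.normSq B = 0 := by rw [← hns, hA0]; simp
        exact (Complex.normSq_eq_zero).mp this
      exact ⟨(1 - α) / 2, ⟨by linarith, by linarith⟩, by rw [hA0, hB0, mul_zero]⟩
    · have habsA : ‖A‖ ≠ 0 := (norm_pos_iff.mpr hA0).ne'
      have habs : ‖A‖ = ‖B‖ := by
        rw [Complex.norm_def, Complex.norm_def, hns]
      have hzabs : ‖B / A‖ = 1 := by
        rw [norm_div, ← habs, div_self habsA]
      obtain ⟨a, hamem, hexp⟩ := exists_a ξ hξpos α hξ1 (B / A) hzabs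
      refine ⟨a, hamem, ?_⟩
      have hCa : C * ((a : ℝ) : ℂ) = ((-2 * Real.pi * ξ * a : ℝ) : ℂ) * Complex.I := by
        rw [hC]; push_cast; ring
      rw [hCa, hexp, div_mul_cancel₀ _ hA0]
  obtain ⟨a, hamem, hkey⟩ := hmain
  obtain ⟨ha0, ha1⟩ := hamem
  refine ⟨a, ⟨ha0, ha1⟩, ξ, ?_⟩
  rw [integral_eval b c d α a ξ hξpos.ne' ha0.le hα0.le (by linarith)]
  have hC0 : Complex.exp (C * ((0 : ℝ) : ℂ)) = 1 := by
    norm_num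
  have hCaα : Complex.exp (C * ((a + α : ℝ) : ℂ))
      = Complex.exp (C * ((a : ℝ) : ℂ)) * Complex.exp (C * ((α : ℝ) : ℂ)) := by
    rw [← Complex.exp_add]
    congr 1
    push_cast
    ring
  rw [hC0, hCaα]
  set Z : ℂ := Complex.exp (C * ((a : ℝ) : ℂ)) with hZ
  have hC0ne : C ≠ 0 := by
    simp [hC, Real.pi_ne_zero, Complex.I_ne_zero, hξpos.ne', Complex.ofReal_eq_zero,
      sub_eq_zero]
  have hsum : (b : ℂ) * ((Z - 1) / C) + (d : ℂ) * ((Z * w - Z) / C)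
      + (c : ℂ) * ((u - Z * w) / C) = (B - Z * A) / C := by
    rw [hA, hB]
    field_simp
    push_cast
    ring
  rw [hsum, hkey, sub_self, zero_div]
end
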